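/- arXiv:2011.07575 — 7 statements merged into one kernel-verified Lean document; each statement's English description precedes it below -/
import Mathlib

section
/- Suppose the linear inverse-problem setup and accuracy assumptions hold, and that x̂ satisfies the strong source condition for some ŵ ∈ Y with factor γ > 0 and parameters γ_δ > 0. Suppose moreover that (e_δ + δ²)/α_δ → 0 and α_δ → 0 as δ ↘ 0. Then there exists δ̄ > 0 such that for all δ ∈ (0, δ̄) one has ‖x_δ − x̂‖_X² ≤ e_δ/(γ γ_δ) + δ²/(2γ² γ_δ) + (α_δ²/(2γ² γ_δ))‖ŵ‖_Y². -/
open scoped RealInnerProductSpace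
open Filter Topology Metric

set_option maxHeartbeats 1600000

/-- **Norm-convergence estimate under the strong source condition**
(Theorem `thm:linear:strong-subreg`).  In the linear inverse-problem setting,
suppose `x̂` satisfies the strong source condition for `ŵ`: the basic source
condition `A x̂ = b̂`, `0 ∈ A*ŵ + ∂R(x̂)` holds, and for every `δ > 0` the
functional `J_δ + α_δ R` is strongly locally subdifferentiable at `x̂` for
`J_δ'(x̂) - α_δ A*ŵ` with respect to the norm
`‖z‖_δ = sqrt(‖Az‖² + γ_δ‖z‖²)`, with factor `γ > 0` independent of `δ` and
neighbourhood `U δ ⊇ U_ρ`.  If `(e_δ + δ²)/α_δ → 0` and `α_δ → 0` as `δ ↘ 0`,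
then there is `δ̄ > 0` such that for `δ ∈ (0, δ̄)` one has
`‖x_δ - x̂‖² ≤ e_δ/(γγ_δ) + δ²/(2γ²γ_δ) + (α_δ²/(2γ²γ_δ))‖ŵ‖²`. -/
theorem strong_source_condition_estimate
    {X Y : Type*} [NormedAddCommGroup X] [NormedSpace ℝ X] [CompleteSpace X]
    [NormedAddCommGroup Y] [InnerProductSpace ℝ Y] [CompleteSpace Y]
    (A : X →L[ℝ] Y) (R : X → EReal)
    (hconv : ∀ p q : X, ∀ t : ℝ, 0 ≤ t → t ≤ 1 →
      R (t • p + (1 - t) • q) ≤ (t : EReal) * R p + ((1 - t : ℝ) : EReal) * R q)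
    (hproper : ∃ p, R p ≠ ⊤) (hnebot : ∀ p, R p ≠ ⊥)
    (hlsc : LowerSemicontinuous R)
    (bhat : Y) (b : ℝ → Y) (hb : ∀ δ : ℝ, 0 < δ → ‖b δ - bhat‖ ≤ δ)
    (α e : ℝ → ℝ) (hα : ∀ δ : ℝ, 0 < δ → 0 < α δ) (he : ∀ δ : ℝ, 0 < δ → 0 ≤ e δ)
    (x : ℝ → X) (xhat : X) (what : Y)
    -- basic source condition
    (hsol : A xhat = bhat)
    (hsource : ∀ z : X, R xhat + ((-⟪what, A (z - xhat)⟫ : ℝ) : EReal) ≤ R z)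
    -- accuracy of the approximate solutions
    (hacc : ∀ δ : ℝ, 0 < δ →
      ((2⁻¹ * ‖A (x δ) - b δ‖ ^ 2 : ℝ) : EReal) + (α δ : EReal) * R (x δ)
        ≤ ((2⁻¹ * ‖A xhat - b δ‖ ^ 2 : ℝ) : EReal) + (α δ : EReal) * R xhat
          + (e δ : EReal))
    -- strong local subdifferentiability with respect to ‖·‖_δ
    (γ ρ : ℝ) (hγ : 0 < γ) (hρ : 0 < ρ) (γΔ : ℝ → ℝ) (hγΔ : ∀ δ : ℝ, 0 < δ → 0 < γΔ δ)
    (U : ℝ → Set X)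
    (hUnhds : ∀ δ : ℝ, 0 < δ → U δ ∈ nhds xhat)
    (hUρ : ∀ δ : ℝ, 0 < δ →
      {z : X | ‖A (z - xhat)‖ ≤ ρ ∧ R z ≤ R xhat + (ρ : EReal)} ⊆ U δ)
    (hssub : ∀ δ : ℝ, 0 < δ → ∀ z ∈ U δ,
      ((2⁻¹ * ‖A xhat - b δ‖ ^ 2 + ⟪A xhat - b δ - α δ • what, A (z - xhat)⟫
          + γ * (‖A (z - xhat)‖ ^ 2 + γΔ δ * ‖z - xhat‖ ^ 2) : ℝ) : EReal)
          + (α δ : EReal) * R xhat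
        ≤ ((2⁻¹ * ‖A z - b δ‖ ^ 2 : ℝ) : EReal) + (α δ : EReal) * R z)
    -- parameter convergence
    (hlim1 : Tendsto (fun δ => (e δ + δ ^ 2) / α δ) (nhdsWithin 0 (Set.Ioi 0)) (nhds 0))
    (hlim2 : Tendsto α (nhdsWithin 0 (Set.Ioi 0)) (nhds 0)) :
    ∃ δbar : ℝ, 0 < δbar ∧ ∀ δ : ℝ, 0 < δ → δ < δbar →
      ‖x δ - xhat‖ ^ 2
        ≤ e δ / (γ * γΔ δ) + δ ^ 2 / (2 * γ ^ 2 * γΔ δ)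
          + α δ ^ 2 / (2 * γ ^ 2 * γΔ δ) * ‖what‖ ^ 2 := by

  classical
  -- `R xhat` is finite
  obtain ⟨p, hp⟩ := hproper
  have hxhat_ne_top : R xhat ≠ ⊤ := by
    intro h
    have h2 := hsource p
    rw [h, EReal.top_add_coe] at h2
    exact hp (top_le_iff.mp h2)
  set c := (R xhat).toReal with hc_def
  have hc : R xhat = (c : EReal) := (EReal.coe_toReal hxhat_ne_top (hnebot xhat)).symm
  -- limits : all relevant quantities tend to 0
  have hαpos : ∀ᶠ δ in nhdsWithin (0:ℝ) (Set.Ioi 0), 0 < α δ := by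
    filter_upwards [self_mem_nhdsWithin] with δ hδ using hα δ hδ
  have hsq : Tendsto (fun δ : ℝ => δ ^ 2) (nhdsWithin 0 (Set.Ioi 0)) (nhds 0) := by
    have : Tendsto (fun δ : ℝ => δ ^ 2) (nhds 0) (nhds 0) := by
      simpa using (continuous_pow 2).tendsto (0:ℝ)
    exact this.mono_left nhdsWithin_le_nhds
  have hesum : Tendsto (fun δ => e δ + δ ^ 2) (nhdsWithin (0:ℝ) (Set.Ioi 0)) (nhds 0) := by
    have h := hlim1.mul hlim2
    rw [zero_mul] at h
    refine h.congr' ?_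
    filter_upwards [hαpos] with δ hδ
    field_simp
  have hetend : Tendsto e (nhdsWithin (0:ℝ) (Set.Ioi 0)) (nhds 0) := by
    have h := hesum.sub hsq
    rw [sub_zero] at h
    refine h.congr (fun δ => by ring)
  have hα2 : Tendsto (fun δ => (α δ) ^ 2 * ‖what‖ ^ 2) (nhdsWithin (0:ℝ) (Set.Ioi 0)) (nhds 0) := by
    have h := ((hlim2.mul hlim2).mul_const (‖what‖ ^ 2))
    rw [zero_mul, zero_mul] at h
    refine h.congr (fun δ => by ring)
  have hF : Tendsto (fun δ => δ ^ 2 + e δ + (α δ) ^ 2 * ‖what‖ ^ 2)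
      (nhdsWithin (0:ℝ) (Set.Ioi 0)) (nhds 0) := by
    have h := (hsq.add hetend).add hα2
    simpa using h
  have hev : ∀ᶠ δ in nhdsWithin (0:ℝ) (Set.Ioi 0),
      (δ ^ 2 + e δ + (α δ) ^ 2 * ‖what‖ ^ 2 < ρ ^ 2 / 16) ∧ (e δ + δ ^ 2) / α δ < ρ := by
    filter_upwards [hF.eventually_lt_const (by positivity : (0:ℝ) < ρ ^ 2 / 16),
      hlim1.eventually_lt_const hρ] with δ h1 h2
    exact ⟨h1, h2⟩
  obtain ⟨δbar, hδbar, hsub⟩ := mem_nhdsGT_iff_exists_Ioo_subset.mp hev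
  refine ⟨δbar, hδbar, fun δ hδ hδlt => ?_⟩
  obtain ⟨hsmall, hsmall2⟩ := hsub ⟨hδ, hδlt⟩
  have hα' : 0 < α δ := hα δ hδ
  have he' : 0 ≤ e δ := he δ hδ
  have hγΔ' : 0 < γΔ δ := hγΔ δ hδ
  have hw0 : 0 ≤ ‖what‖ := norm_nonneg _
  -- `R (x δ)` is finite
  have hRtop : R (x δ) ≠ ⊤ := by
    intro h
    have h2 := hacc δ hδ
    rw [h, hc, EReal.mul_top_of_pos (by exact_mod_cast hα' : (0:EReal) < (α δ : EReal)),
      EReal.coe_add_top] at h2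
    simp only [← EReal.coe_mul, ← EReal.coe_add] at h2
    exact EReal.coe_ne_top _ (top_le_iff.mp h2)
  set d := (R (x δ)).toReal with hd_def
  have hd : R (x δ) = (d : EReal) := (EReal.coe_toReal hRtop (hnebot _)).symm
  -- real versions of the hypotheses
  have haccR : 2⁻¹ * ‖A (x δ) - b δ‖ ^ 2 + α δ * d
      ≤ 2⁻¹ * ‖A xhat - b δ‖ ^ 2 + α δ * c + e δ := by
    have h := hacc δ hδ
    rw [hc, hd] at h
    exact_mod_cast h
  have hsrcR : c + -⟪what, A (x δ - xhat)⟫ ≤ d := by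
    have h := hsource (x δ)
    rw [hc, hd] at h
    exact_mod_cast h
  set t := ‖A (x δ - xhat)‖ with ht_def
  set s := ‖A (x δ) - b δ‖ with hs_def
  set n := ‖x δ - xhat‖ with hn_def
  have ht0 : 0 ≤ t := norm_nonneg _
  have hs0 : 0 ≤ s := norm_nonneg _
  have hn0 : 0 ≤ n := norm_nonneg _
  have hAxb : ‖A xhat - b δ‖ ≤ δ := by
    rw [hsol, norm_sub_rev]
    exact hb δ hδ
  have hts : t ≤ s + δ := by
    have h1 : A (x δ - xhat) = (A (x δ) - b δ) + (b δ - bhat) := by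
      rw [map_sub, hsol]; abel
    rw [ht_def, h1]
    exact (norm_add_le _ _).trans (by gcongr; exact hb δ hδ)
  have hinner : |⟪what, A (x δ - xhat)⟫| ≤ ‖what‖ * t := abs_real_inner_le_norm _ _
  -- key inequality for membership in `U_ρ`
  have hhalf : 2⁻¹ * s ^ 2 ≤ 2⁻¹ * δ ^ 2 + e δ + α δ * (‖what‖ * t) := by
    have h1 : α δ * c - α δ * (‖what‖ * t) ≤ α δ * d := by
      have := (abs_le.mp hinner).2
      nlinarith [hsrcR]
    have h2 : 2⁻¹ * ‖A xhat - b δ‖ ^ 2 ≤ 2⁻¹ * δ ^ 2 := by nlinarith [norm_nonneg (A xhat - b δ)]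
    linarith [haccR]
  have htρ : t ≤ ρ := by
    have h1 : t ^ 2 ≤ 4 * δ ^ 2 + 4 * e δ + 4 * (α δ * ‖what‖) * t := by
      nlinarith [hhalf, mul_self_le_mul_self ht0 hts, sq_nonneg (s - δ)]
    have h2 : t ^ 2 ≤ 8 * δ ^ 2 + 8 * e δ + 16 * (α δ) ^ 2 * ‖what‖ ^ 2 := by
      nlinarith [h1, sq_nonneg (t - 4 * α δ * ‖what‖)]
    have ht2 : t ^ 2 ≤ ρ ^ 2 := by nlinarith [h2, hsmall, sq_nonneg δ, he', sq_nonneg (α δ * ‖what‖)]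
    nlinarith [ht2, hρ, ht0]
  have hdρ : d ≤ c + ρ := by
    have h1 : α δ * (d - c) ≤ e δ + δ ^ 2 := by
      nlinarith [haccR, sq_nonneg s, sq_nonneg δ,
        mul_self_le_mul_self (norm_nonneg (A xhat - b δ)) hAxb]
    have h2 : (e δ + δ ^ 2) / α δ ≤ ρ := hsmall2.le
    rw [div_le_iff₀ hα'] at h2
    nlinarith
  have hmem : x δ ∈ U δ := by
    refine hUρ δ hδ ⟨htρ, ?_⟩
    rw [hc, hd]
    exact_mod_cast hdρ
  -- strong subdifferentiability at `x δ`
  have hssubR : 2⁻¹ * ‖A xhat - b δ‖ ^ 2 + ⟪A xhat - b δ - α δ • what, A (x δ - xhat)⟫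
      + γ * (t ^ 2 + γΔ δ * n ^ 2) + α δ * c
      ≤ 2⁻¹ * s ^ 2 + α δ * d := by
    have h := hssub δ hδ (x δ) hmem
    rw [hc, hd] at h
    exact_mod_cast h
  have hip : ⟪A xhat - b δ - α δ • what, A (x δ - xhat)⟫
      = ⟪A xhat - b δ, A (x δ - xhat)⟫ - α δ * ⟪what, A (x δ - xhat)⟫ := by
    rw [inner_sub_left, real_inner_smul_left]
  have hip1 : |⟪A xhat - b δ, A (x δ - xhat)⟫| ≤ δ * t := by
    refine (abs_real_inner_le_norm _ _).trans ?_
    exact mul_le_mul_of_nonneg_right hAxb ht0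
  -- the main estimate
  have hkey : γ * γΔ δ * n ^ 2 ≤ e δ + (δ + α δ * ‖what‖) * t - γ * t ^ 2 := by
    have h1 : ⟪A xhat - b δ - α δ • what, A (x δ - xhat)⟫ + γ * (t ^ 2 + γΔ δ * n ^ 2) ≤ e δ := by
      linarith [hssubR, haccR]
    have h2 := (abs_le.mp hip1).1
    have h3 := (abs_le.mp hinner).2
    rw [hip] at h1
    nlinarith [h1, h2, mul_le_mul_of_nonneg_left h3 hα'.le]
  have hrw : e δ / (γ * γΔ δ) + δ ^ 2 / (2 * γ ^ 2 * γΔ δ)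
      + α δ ^ 2 / (2 * γ ^ 2 * γΔ δ) * ‖what‖ ^ 2
      = (2 * γ * e δ + δ ^ 2 + α δ ^ 2 * ‖what‖ ^ 2) / (2 * γ ^ 2 * γΔ δ) := by
    field_simp
  rw [hrw, le_div_iff₀ (by positivity)]
  nlinarith [hkey, sq_nonneg (2 * γ * t - (δ + α δ * ‖what‖)), sq_nonneg (δ - α δ * ‖what‖), hγ, hγΔ']
end

section
/- Suppose the linear inverse-problem setup and accuracy assumptions hold, and that x̂ satisfies the strong source condition for some ŵ ∈ Y with parameters γ_δ > 0. If (α_δ², δ², e_δ)/min{α_δ, γ_δ} → 0 as δ ↘ 0, then ‖x_δ − x̂‖_X → 0 as δ ↘ 0. -/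
/-!
Subtracting the source condition from the accuracy inequality gives
`½‖A(x_δ - x̂)‖² ≤ e_δ + (δ + α_δ‖ŵ‖)‖A(x_δ - x̂)‖`, and the accuracy inequality alone gives
`R(x_δ) ≤ R(x̂) + (e_δ + δ²/2)/α_δ`; both right-hand sides vanish as `δ ↘ 0`, so `x_δ`
eventually lies in `U_ρ`. There the strong subdifferentiability inequality, combined with the
accuracy inequality and Young's inequality, yields the rate
`γ²‖x_δ - x̂‖_δ² ≲ α_δ² + δ² + e_δ`, and `‖x_δ - x̂‖_δ² ≥ γ_δ‖x_δ - x̂‖²` with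
`γ_δ ≥ min{α_δ, γ_δ}` turns it into the claim.
-/

open scoped RealInnerProductSpace
open Filter Topology

theorem tendsto_zero_of_sq_le {ι : Type*} {l : Filter ι} {f g : ι → ℝ}
    (hg : Tendsto g l (𝓝 0)) (hfg : ∀ᶠ i in l, f i ^ 2 ≤ g i) : Tendsto f l (𝓝 0) :=
  squeeze_zero_norm' (hfg.mono fun _ hi => Real.abs_le_sqrt hi) (by simpa using hg.sqrt)

theorem sq_mul_le_of_mul_le_add_mul {a t s e c : ℝ} (ha : 0 < a) (ht : 0 ≤ t)
    (h : a * (s ^ 2 + t) ≤ e + c * s) : a ^ 2 * (s ^ 2 + t) ≤ 2 * a * e + c ^ 2 := by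
  nlinarith [sq_nonneg (a * s - c), mul_nonneg (sq_nonneg a) ht]

theorem add_mul_sq_le (δ α k : ℝ) : (δ + α * k) ^ 2 ≤ (1 + k ^ 2) * (α ^ 2 + δ ^ 2) := by
  nlinarith [sq_nonneg (α - k * δ)]

theorem neg_mul_norm_le_inner_sub_smul {Y : Type*} [NormedAddCommGroup Y] [InnerProductSpace ℝ Y]
    {u w : Y} (v : Y) {α δ : ℝ} (hu : ‖u‖ ≤ δ) (hα : 0 ≤ α) :
    -((δ + α * ‖w‖) * ‖v‖) ≤ ⟪u - α • w, v⟫ := by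
  have hnorm : ‖u - α • w‖ ≤ δ + α * ‖w‖ := by
    calc ‖u - α • w‖ ≤ ‖u‖ + ‖α • w‖ := norm_sub_le _ _
      _ ≤ δ + α * ‖w‖ := by rw [norm_smul, Real.norm_of_nonneg hα]; linarith
  calc -((δ + α * ‖w‖) * ‖v‖) ≤ -(‖u - α • w‖ * ‖v‖) := by gcongr
    _ ≤ ⟪u - α • w, v⟫ := neg_le_of_abs_le (abs_real_inner_le_norm _ _)

theorem EReal.ne_top_of_coe_add_coe_mul_le {a c d e r : ℝ} {u : EReal} (hc : 0 < c)
    (h : (a : EReal) + (c : EReal) * u ≤ (d : EReal) + (c : EReal) * (r : EReal) + (e : EReal)) :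
    u ≠ ⊤ := by
  rintro rfl
  rw [EReal.coe_mul_top_of_pos hc, EReal.coe_add_top, top_le_iff] at h
  exact EReal.coe_ne_top (d + c * r + e) (by exact_mod_cast h)

theorem le_div_mul_of_le {S m a : ℝ} (hS : 0 ≤ S) (hm : 0 < m) (ha : m ≤ a) : S ≤ S / m * a := by
  rw [div_mul_eq_mul_div, le_div_iff₀ hm]
  exact mul_le_mul_of_nonneg_left ha hS

section Estimates

variable {X Y : Type*} [NormedAddCommGroup X] [NormedSpace ℝ X]
  [NormedAddCommGroup Y] [InnerProductSpace ℝ Y] {A : X →L[ℝ] Y} {R : X → EReal}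
  {b w : Y} {x xhat : X} {α e δ γ γΔ r₀ r₁ : ℝ}

theorem sq_norm_map_sub_le_of_accuracy (hα : 0 ≤ α) (he : 0 ≤ e) (hb : ‖A xhat - b‖ ≤ δ)
    (h₀ : R xhat = r₀) (h₁ : R x = r₁)
    (hacc : ((2⁻¹ * ‖A x - b‖ ^ 2 : ℝ) : EReal) + (α : EReal) * R x
      ≤ ((2⁻¹ * ‖A xhat - b‖ ^ 2 : ℝ) : EReal) + (α : EReal) * R xhat + (e : EReal))
    (hsrc : R xhat + ((-⟪w, A (x - xhat)⟫ : ℝ) : EReal) ≤ R x) :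
    ‖A (x - xhat)‖ ^ 2 ≤ 4 * (1 + ‖w‖ ^ 2) * (α ^ 2 + δ ^ 2 + e) := by
  rw [h₀, h₁] at hacc hsrc
  have hacc : 2⁻¹ * ‖A x - b‖ ^ 2 + α * r₁ ≤ 2⁻¹ * ‖A xhat - b‖ ^ 2 + α * r₀ + e := by
    exact_mod_cast hacc
  have hsrc : r₀ - ⟪w, A (x - xhat)⟫ ≤ r₁ := by exact_mod_cast hsrc
  have hexpand : ‖A x - b‖ ^ 2
      = ‖A (x - xhat)‖ ^ 2 + 2 * ⟪A xhat - b, A (x - xhat)⟫ + ‖A xhat - b‖ ^ 2 := by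
    rw [← real_inner_comm, ← norm_add_sq_real, map_sub, sub_add_sub_cancel]
  have hinner := neg_mul_norm_le_inner_sub_smul (A (x - xhat)) hb hα (w := w)
  rw [inner_sub_left, real_inner_smul_left] at hinner
  have hquad : 2⁻¹ * (‖A (x - xhat)‖ ^ 2 + 0)
      ≤ e + (δ + α * ‖w‖) * ‖A (x - xhat)‖ := by
    nlinarith [mul_le_mul_of_nonneg_left hsrc hα]
  have := sq_mul_le_of_mul_le_add_mul (by norm_num) le_rfl hquad
  nlinarith [add_mul_sq_le δ α ‖w‖, sq_nonneg ‖w‖]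

theorem sq_mul_norm_le_of_strong (hγ : 0 < γ) (hγΔ : 0 ≤ γΔ) (hα : 0 ≤ α) (he : 0 ≤ e)
    (hb : ‖A xhat - b‖ ≤ δ) (h₀ : R xhat = r₀) (h₁ : R x = r₁)
    (hacc : ((2⁻¹ * ‖A x - b‖ ^ 2 : ℝ) : EReal) + (α : EReal) * R x
      ≤ ((2⁻¹ * ‖A xhat - b‖ ^ 2 : ℝ) : EReal) + (α : EReal) * R xhat + (e : EReal))
    (hssub : ((2⁻¹ * ‖A xhat - b‖ ^ 2 + ⟪A xhat - b - α • w, A (x - xhat)⟫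
          + γ * (‖A (x - xhat)‖ ^ 2 + γΔ * ‖x - xhat‖ ^ 2) : ℝ) : EReal)
          + (α : EReal) * R xhat
        ≤ ((2⁻¹ * ‖A x - b‖ ^ 2 : ℝ) : EReal) + (α : EReal) * R x) :
    γ ^ 2 * (‖A (x - xhat)‖ ^ 2 + γΔ * ‖x - xhat‖ ^ 2)
      ≤ (2 * γ + 1 + ‖w‖ ^ 2) * (α ^ 2 + δ ^ 2 + e) := by
  rw [h₀, h₁] at hacc hssub
  have hacc : 2⁻¹ * ‖A x - b‖ ^ 2 + α * r₁ ≤ 2⁻¹ * ‖A xhat - b‖ ^ 2 + α * r₀ + e := by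
    exact_mod_cast hacc
  have hssub : 2⁻¹ * ‖A xhat - b‖ ^ 2 + ⟪A xhat - b - α • w, A (x - xhat)⟫
      + γ * (‖A (x - xhat)‖ ^ 2 + γΔ * ‖x - xhat‖ ^ 2) + α * r₀
      ≤ 2⁻¹ * ‖A x - b‖ ^ 2 + α * r₁ := by
    exact_mod_cast hssub
  have hquad : γ * (‖A (x - xhat)‖ ^ 2 + γΔ * ‖x - xhat‖ ^ 2)
      ≤ e + (δ + α * ‖w‖) * ‖A (x - xhat)‖ := by
    linarith [neg_mul_norm_le_inner_sub_smul (A (x - xhat)) hb hα (w := w)]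
  have := sq_mul_le_of_mul_le_add_mul hγ (by positivity) hquad
  nlinarith [add_mul_sq_le δ α ‖w‖, sq_nonneg ‖w‖, sq_nonneg α, sq_nonneg δ]

theorem norm_map_sub_le_and_le_add_of_accuracy {ε ρ : ℝ} (hα : 0 < α) (he : 0 ≤ e)
    (hb : ‖A xhat - b‖ ≤ δ) (h₀ : R xhat = r₀) (h₁ : R x = r₁)
    (hacc : ((2⁻¹ * ‖A x - b‖ ^ 2 : ℝ) : EReal) + (α : EReal) * R x
      ≤ ((2⁻¹ * ‖A xhat - b‖ ^ 2 : ℝ) : EReal) + (α : EReal) * R xhat + (e : EReal))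
    (hsrc : R xhat + ((-⟪w, A (x - xhat)⟫ : ℝ) : EReal) ≤ R x)
    (hS : α ^ 2 + δ ^ 2 + e ≤ ε * α) (hερ : ε ≤ ρ)
    (hερ' : 4 * (1 + ‖w‖ ^ 2) * ε ^ 2 ≤ ρ ^ 2) :
    ‖A (x - xhat)‖ ≤ ρ ∧ R x ≤ R xhat + ρ := by
  have hαε : α ≤ ε := le_of_mul_le_mul_right (by nlinarith) hα
  have hSε : α ^ 2 + δ ^ 2 + e ≤ ε ^ 2 := hS.trans (by nlinarith)
  constructor
  · refine (sq_le_sq₀ (norm_nonneg _) (hα.le.trans (hαε.trans hερ))).1 ?_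
    nlinarith [sq_norm_map_sub_le_of_accuracy hα.le he hb h₀ h₁ hacc hsrc, sq_nonneg ‖w‖]
  · rw [h₀, h₁] at hacc ⊢
    have hacc : 2⁻¹ * ‖A x - b‖ ^ 2 + α * r₁ ≤ 2⁻¹ * ‖A xhat - b‖ ^ 2 + α * r₀ + e := by
      exact_mod_cast hacc
    have hb2 : ‖A xhat - b‖ ^ 2 ≤ δ ^ 2 := pow_le_pow_left₀ (norm_nonneg _) hb 2
    have hreg : r₁ * α ≤ (r₀ + ρ) * α := by nlinarith [sq_nonneg ‖A x - b‖]
    exact_mod_cast le_of_mul_le_mul_right hreg hα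

theorem sq_norm_sub_le_of_strong {ε : ℝ} (hγ : 0 < γ) (hγΔ : 0 < γΔ) (hα : 0 ≤ α) (he : 0 ≤ e)
    (hb : ‖A xhat - b‖ ≤ δ) (h₀ : R xhat = r₀) (h₁ : R x = r₁)
    (hacc : ((2⁻¹ * ‖A x - b‖ ^ 2 : ℝ) : EReal) + (α : EReal) * R x
      ≤ ((2⁻¹ * ‖A xhat - b‖ ^ 2 : ℝ) : EReal) + (α : EReal) * R xhat + (e : EReal))
    (hssub : ((2⁻¹ * ‖A xhat - b‖ ^ 2 + ⟪A xhat - b - α • w, A (x - xhat)⟫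
          + γ * (‖A (x - xhat)‖ ^ 2 + γΔ * ‖x - xhat‖ ^ 2) : ℝ) : EReal)
          + (α : EReal) * R xhat
        ≤ ((2⁻¹ * ‖A x - b‖ ^ 2 : ℝ) : EReal) + (α : EReal) * R x)
    (hS : α ^ 2 + δ ^ 2 + e ≤ ε * γΔ) :
    ‖x - xhat‖ ^ 2 ≤ (2 * γ + 1 + ‖w‖ ^ 2) / γ ^ 2 * ε := by
  have hrate := sq_mul_norm_le_of_strong hγ hγΔ.le hα he hb h₀ h₁ hacc hssub
  rw [div_mul_eq_mul_div, le_div_iff₀ (by positivity)]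
  refine le_of_mul_le_mul_right ?_ hγΔ
  nlinarith [mul_le_mul_of_nonneg_left hS (by positivity : (0 : ℝ) ≤ 2 * γ + 1 + ‖w‖ ^ 2),
    mul_nonneg (sq_nonneg γ) (sq_nonneg ‖A (x - xhat)‖)]

end Estimates

theorem strong_source_condition_convergence_general
    {X Y : Type*} [NormedAddCommGroup X] [NormedSpace ℝ X]
    [NormedAddCommGroup Y] [InnerProductSpace ℝ Y]
    (A : X →L[ℝ] Y) (R : X → EReal)
    (hproper : ∃ p, R p ≠ ⊤) (hnebot : ∀ p, R p ≠ ⊥)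
    (bhat : Y) (b : ℝ → Y) (hb : ∀ δ : ℝ, 0 < δ → ‖b δ - bhat‖ ≤ δ)
    (α e : ℝ → ℝ) (hα : ∀ δ : ℝ, 0 < δ → 0 < α δ) (he : ∀ δ : ℝ, 0 < δ → 0 ≤ e δ)
    (x : ℝ → X) (xhat : X) (what : Y)
    -- basic source condition
    (hsol : A xhat = bhat)
    (hsource : ∀ z : X, R xhat + ((-⟪what, A (z - xhat)⟫ : ℝ) : EReal) ≤ R z)
    -- accuracy of the approximate solutions
    (hacc : ∀ δ : ℝ, 0 < δ →
      ((2⁻¹ * ‖A (x δ) - b δ‖ ^ 2 : ℝ) : EReal) + (α δ : EReal) * R (x δ)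
        ≤ ((2⁻¹ * ‖A xhat - b δ‖ ^ 2 : ℝ) : EReal) + (α δ : EReal) * R xhat
          + (e δ : EReal))
    -- strong local subdifferentiability with respect to ‖·‖_δ
    (γ ρ : ℝ) (hγ : 0 < γ) (hρ : 0 < ρ) (γΔ : ℝ → ℝ) (hγΔ : ∀ δ : ℝ, 0 < δ → 0 < γΔ δ)
    (U : ℝ → Set X)
    (hUρ : ∀ δ : ℝ, 0 < δ →
      {z : X | ‖A (z - xhat)‖ ≤ ρ ∧ R z ≤ R xhat + (ρ : EReal)} ⊆ U δ)
    (hssub : ∀ δ : ℝ, 0 < δ → ∀ z ∈ U δ,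
      ((2⁻¹ * ‖A xhat - b δ‖ ^ 2 + ⟪A xhat - b δ - α δ • what, A (z - xhat)⟫
          + γ * (‖A (z - xhat)‖ ^ 2 + γΔ δ * ‖z - xhat‖ ^ 2) : ℝ) : EReal)
          + (α δ : EReal) * R xhat
        ≤ ((2⁻¹ * ‖A z - b δ‖ ^ 2 : ℝ) : EReal) + (α δ : EReal) * R z)
    -- parameter convergence: (α_δ², δ², e_δ)/min{α_δ, γ_δ} → 0
    (hlim1 : Tendsto (fun δ => α δ ^ 2 / min (α δ) (γΔ δ)) (nhdsWithin 0 (Set.Ioi 0)) (nhds 0))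
    (hlim2 : Tendsto (fun δ => δ ^ 2 / min (α δ) (γΔ δ)) (nhdsWithin 0 (Set.Ioi 0)) (nhds 0))
    (hlim3 : Tendsto (fun δ => e δ / min (α δ) (γΔ δ)) (nhdsWithin 0 (Set.Ioi 0)) (nhds 0)) :
    Tendsto (fun δ => ‖x δ - xhat‖) (nhdsWithin 0 (Set.Ioi 0)) (nhds 0) := by
  obtain ⟨p, hp⟩ := hproper
  have h₀ : R xhat = (R xhat).toReal :=
    (EReal.coe_toReal (fun h => hp (by simpa [h] using hsource p)) (hnebot _)).symm
  have h₁ : ∀ δ, 0 < δ → R (x δ) = (R (x δ)).toReal := fun δ hδ =>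
    (EReal.coe_toReal (EReal.ne_top_of_coe_add_coe_mul_le (hα δ hδ) (h₀ ▸ hacc δ hδ))
      (hnebot _)).symm
  have hres : ∀ δ, 0 < δ → ‖A xhat - b δ‖ ≤ δ := fun δ hδ => by
    rw [hsol, norm_sub_rev]; exact hb δ hδ
  set ε := fun δ => (α δ ^ 2 + δ ^ 2 + e δ) / min (α δ) (γΔ δ)
  have hε : Tendsto ε (𝓝[>] 0) (𝓝 0) := by
    simpa [ε, add_div] using (hlim1.add hlim2).add hlim3
  have hsize : ∀ δ, 0 < δ → ∀ a, min (α δ) (γΔ δ) ≤ a → α δ ^ 2 + δ ^ 2 + e δ ≤ ε δ * a :=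
    fun δ hδ _ => le_div_mul_of_le (by linarith [he δ hδ, sq_nonneg δ, sq_nonneg (α δ)])
      (lt_min (hα δ hδ) (hγΔ δ hδ))
  have hpos : ∀ᶠ δ : ℝ in 𝓝[>] 0, 0 < δ := self_mem_nhdsWithin
  have hmem : ∀ᶠ δ in 𝓝[>] 0, x δ ∈ U δ := by
    filter_upwards [hpos, hε.eventually_le_const hρ,
      ((hε.pow 2).const_mul (4 * (1 + ‖what‖ ^ 2))).eventually_le_const (by simpa using pow_pos hρ 2)]
      with δ hδ hερ hερ'
    exact hUρ δ hδ (norm_map_sub_le_and_le_add_of_accuracy (hα δ hδ) (he δ hδ) (hres δ hδ) h₀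
      (h₁ δ hδ) (hacc δ hδ) (hsource _) (hsize δ hδ _ (min_le_left _ _)) hερ hερ')
  refine tendsto_zero_of_sq_le (by simpa using hε.const_mul ((2 * γ + 1 + ‖what‖ ^ 2) / γ ^ 2)) ?_
  filter_upwards [hpos, hmem] with δ hδ hx
  exact sq_norm_sub_le_of_strong hγ (hγΔ δ hδ) (hα δ hδ).le (he δ hδ) (hres δ hδ) h₀ (h₁ δ hδ)
    (hacc δ hδ) (hssub δ hδ _ hx) (hsize δ hδ _ (min_le_right _ _))

/-- **Norm convergence under the strong source condition**
(Corollary `cor:linear:strong-subreg`).  In the linear inverse-problem setting,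
suppose `x̂` satisfies the strong source condition for `ŵ`: the basic source
condition `A x̂ = b̂`, `0 ∈ A*ŵ + ∂R(x̂)` holds, and for every `δ > 0` the
functional `J_δ + α_δ R` is strongly locally subdifferentiable at `x̂` for
`J_δ'(x̂) - α_δ A*ŵ` with respect to the norm
`‖z‖_δ = sqrt(‖Az‖² + γ_δ‖z‖²)`, with factor `γ > 0` independent of `δ` and
neighbourhood `U δ ⊇ U_ρ`.  If `(α_δ², δ², e_δ)/min{α_δ, γ_δ} → 0` as `δ ↘ 0`,
then `‖x_δ - x̂‖ → 0` as `δ ↘ 0`. -/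
theorem strong_source_condition_convergence
    {X Y : Type*} [NormedAddCommGroup X] [NormedSpace ℝ X] [CompleteSpace X]
    [NormedAddCommGroup Y] [InnerProductSpace ℝ Y] [CompleteSpace Y]
    (A : X →L[ℝ] Y) (R : X → EReal)
    (hconv : ∀ p q : X, ∀ t : ℝ, 0 ≤ t → t ≤ 1 →
      R (t • p + (1 - t) • q) ≤ (t : EReal) * R p + ((1 - t : ℝ) : EReal) * R q)
    (hproper : ∃ p, R p ≠ ⊤) (hnebot : ∀ p, R p ≠ ⊥)
    (hlsc : LowerSemicontinuous R)
    (bhat : Y) (b : ℝ → Y) (hb : ∀ δ : ℝ, 0 < δ → ‖b δ - bhat‖ ≤ δ)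
    (α e : ℝ → ℝ) (hα : ∀ δ : ℝ, 0 < δ → 0 < α δ) (he : ∀ δ : ℝ, 0 < δ → 0 ≤ e δ)
    (x : ℝ → X) (xhat : X) (what : Y)
    -- basic source condition
    (hsol : A xhat = bhat)
    (hsource : ∀ z : X, R xhat + ((-⟪what, A (z - xhat)⟫ : ℝ) : EReal) ≤ R z)
    -- accuracy of the approximate solutions
    (hacc : ∀ δ : ℝ, 0 < δ →
      ((2⁻¹ * ‖A (x δ) - b δ‖ ^ 2 : ℝ) : EReal) + (α δ : EReal) * R (x δ)
        ≤ ((2⁻¹ * ‖A xhat - b δ‖ ^ 2 : ℝ) : EReal) + (α δ : EReal) * R xhat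
          + (e δ : EReal))
    -- strong local subdifferentiability with respect to ‖·‖_δ
    (γ ρ : ℝ) (hγ : 0 < γ) (hρ : 0 < ρ) (γΔ : ℝ → ℝ) (hγΔ : ∀ δ : ℝ, 0 < δ → 0 < γΔ δ)
    (U : ℝ → Set X)
    (hUnhds : ∀ δ : ℝ, 0 < δ → U δ ∈ nhds xhat)
    (hUρ : ∀ δ : ℝ, 0 < δ →
      {z : X | ‖A (z - xhat)‖ ≤ ρ ∧ R z ≤ R xhat + (ρ : EReal)} ⊆ U δ)
    (hssub : ∀ δ : ℝ, 0 < δ → ∀ z ∈ U δ,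
      ((2⁻¹ * ‖A xhat - b δ‖ ^ 2 + ⟪A xhat - b δ - α δ • what, A (z - xhat)⟫
          + γ * (‖A (z - xhat)‖ ^ 2 + γΔ δ * ‖z - xhat‖ ^ 2) : ℝ) : EReal)
          + (α δ : EReal) * R xhat
        ≤ ((2⁻¹ * ‖A z - b δ‖ ^ 2 : ℝ) : EReal) + (α δ : EReal) * R z)
    -- parameter convergence: (α_δ², δ², e_δ)/min{α_δ, γ_δ} → 0
    (hlim1 : Tendsto (fun δ => α δ ^ 2 / min (α δ) (γΔ δ)) (nhdsWithin 0 (Set.Ioi 0)) (nhds 0))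
    (hlim2 : Tendsto (fun δ => δ ^ 2 / min (α δ) (γΔ δ)) (nhdsWithin 0 (Set.Ioi 0)) (nhds 0))
    (hlim3 : Tendsto (fun δ => e δ / min (α δ) (γΔ δ)) (nhdsWithin 0 (Set.Ioi 0)) (nhds 0)) :
    Tendsto (fun δ => ‖x δ - xhat‖) (nhdsWithin 0 (Set.Ioi 0)) (nhds 0) :=
  strong_source_condition_convergence_general A R hproper hnebot bhat b hb α e hα he x xhat what
    hsol hsource hacc γ ρ hγ hρ γΔ hγΔ U hUρ hssub hlim1 hlim2 hlim3
end

section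
/- Suppose the linear inverse-problem setup and accuracy assumptions hold, and that x̂ ∈ X satisfies the semi-strong source condition for some ŵ ∈ Y with factor γ > 0, neighbourhood U^{x̂}, and parameters γ_δ > 0. If x_δ ∈ U^{x̂}, then dist²(x_δ, X̂) ≤ e_δ/(γ γ_δ) + δ²/(2γ² γ_δ) + (α_δ²/(2γ² γ_δ))‖ŵ‖_Y². -/
open scoped RealInnerProductSpace
open Filter Topology Metric

/-- **Distance estimate under the semi-strong source condition**
(Lemma `lemma:linear:subreg`).  In the linear inverse-problem setting, let `X̂`
be the set of points satisfying the basic source condition.  Suppose `x̂`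
satisfies the semi-strong source condition for `ŵ`: the basic source condition
holds at `x̂`, and for every `δ > 0` the functional `J_δ + α_δ R` is
`(A, γ_δ)`-strongly locally subdifferentiable at `x̂` for `J_δ'(x̂) - α_δ A*ŵ`
with respect to `X̂`, with factor `γ > 0` and neighbourhood `U` independent of
`δ`.  Then, whenever `x_δ ∈ U`,
`dist²(x_δ, X̂) ≤ e_δ/(γγ_δ) + δ²/(2γ²γ_δ) + (α_δ²/(2γ²γ_δ))‖ŵ‖²`. -/
theorem semi_strong_source_condition_estimate
    {X Y : Type*} [NormedAddCommGroup X] [NormedSpace ℝ X] [CompleteSpace X]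
    [NormedAddCommGroup Y] [InnerProductSpace ℝ Y] [CompleteSpace Y]
    (A : X →L[ℝ] Y) (R : X → EReal)
    (hconv : ∀ p q : X, ∀ t : ℝ, 0 ≤ t → t ≤ 1 →
      R (t • p + (1 - t) • q) ≤ (t : EReal) * R p + ((1 - t : ℝ) : EReal) * R q)
    (hproper : ∃ p, R p ≠ ⊤) (hnebot : ∀ p, R p ≠ ⊥)
    (hlsc : LowerSemicontinuous R)
    (bhat : Y) (b : ℝ → Y) (hb : ∀ δ : ℝ, 0 < δ → ‖b δ - bhat‖ ≤ δ)
    (α e : ℝ → ℝ) (hα : ∀ δ : ℝ, 0 < δ → 0 < α δ) (he : ∀ δ : ℝ, 0 < δ → 0 ≤ e δ)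
    (x : ℝ → X) (xhat : X) (what : Y)
    -- the set X̂ of solutions satisfying the basic source condition
    (Xhat : Set X)
    (hXhat : Xhat = {z : X | A z = bhat ∧
      ∃ w : Y, ∀ v : X, R z + ((-⟪w, A (v - z)⟫ : ℝ) : EReal) ≤ R v})
    -- basic source condition at x̂ for ŵ
    (hsol : A xhat = bhat)
    (hsource : ∀ z : X, R xhat + ((-⟪what, A (z - xhat)⟫ : ℝ) : EReal) ≤ R z)
    -- accuracy of the approximate solutions
    (hacc : ∀ δ : ℝ, 0 < δ → ∀ xh ∈ Xhat,
      ((2⁻¹ * ‖A (x δ) - b δ‖ ^ 2 : ℝ) : EReal) + (α δ : EReal) * R (x δ)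
        ≤ ((2⁻¹ * ‖A xh - b δ‖ ^ 2 : ℝ) : EReal) + (α δ : EReal) * R xh
          + (e δ : EReal))
    -- (A, γ_δ)-strong local subdifferentiability with respect to X̂
    (γ : ℝ) (hγ : 0 < γ) (γΔ : ℝ → ℝ) (hγΔ : ∀ δ : ℝ, 0 < δ → 0 < γΔ δ)
    (U : Set X) (hUnhds : U ∈ nhds xhat)
    (hssub : ∀ δ : ℝ, 0 < δ → ∀ z ∈ U,
      ((2⁻¹ * ‖A xhat - b δ‖ ^ 2 + ⟪A xhat - b δ - α δ • what, A (z - xhat)⟫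
          + γ * ‖A (z - xhat)‖ ^ 2 + γ * γΔ δ * infDist z Xhat ^ 2 : ℝ) : EReal)
          + (α δ : EReal) * R xhat
        ≤ ((2⁻¹ * ‖A z - b δ‖ ^ 2 : ℝ) : EReal) + (α δ : EReal) * R z) :
    ∀ δ : ℝ, 0 < δ → x δ ∈ U →
      infDist (x δ) Xhat ^ 2
        ≤ e δ / (γ * γΔ δ) + δ ^ 2 / (2 * γ ^ 2 * γΔ δ)
          + α δ ^ 2 / (2 * γ ^ 2 * γΔ δ) * ‖what‖ ^ 2 := by
  intro δ hδ hx
  -- R x̂ is finite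
  have hrt : R xhat ≠ ⊤ := by
    obtain ⟨p, hp⟩ := hproper
    intro h
    have := hsource p
    rw [h] at this
    rw [EReal.top_add_of_ne_bot (by exact_mod_cast EReal.coe_ne_bot _)] at this
    exact hp (top_le_iff.mp this)
  obtain ⟨r0, hr0⟩ : ∃ r0 : ℝ, R xhat = (r0 : EReal) :=
    ⟨(R xhat).toReal, (EReal.coe_toReal hrt (hnebot xhat)).symm⟩
  have hmem : xhat ∈ Xhat := by
    rw [hXhat]; exact ⟨hsol, what, hsource⟩
  have H := (hssub δ hδ (x δ) hx).trans (hacc δ hδ xhat hmem)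
  rw [hr0] at H
  have H' : 2⁻¹ * ‖A xhat - b δ‖ ^ 2 + ⟪A xhat - b δ - α δ • what, A (x δ - xhat)⟫
      + γ * ‖A (x δ - xhat)‖ ^ 2 + γ * γΔ δ * infDist (x δ) Xhat ^ 2 + α δ * r0
      ≤ 2⁻¹ * ‖A xhat - b δ‖ ^ 2 + α δ * r0 + e δ := by exact_mod_cast H
  set d := infDist (x δ) Xhat with hd
  set v := A (x δ - xhat) with hv
  set u := A xhat - b δ - α δ • what with hu
  have h2 : ⟪u, v⟫ + γ * ‖v‖ ^ 2 + γ * γΔ δ * d ^ 2 ≤ e δ := by linarith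
  have hinner : -(‖u‖ * ‖v‖) ≤ ⟪u, v⟫ := neg_le_of_abs_le (abs_real_inner_le_norm u v)
  have hkey : 4 * γ * (γ * γΔ δ * d ^ 2) ≤ 4 * γ * e δ + ‖u‖ ^ 2 := by
    nlinarith [sq_nonneg (‖u‖ - 2 * γ * ‖v‖), hγ, mul_pos hγ (hγΔ δ hδ)]
  have hub : ‖u‖ ≤ δ + α δ * ‖what‖ := by
    have h1 : ‖u‖ ≤ ‖A xhat - b δ‖ + ‖α δ • what‖ := norm_sub_le _ _
    have h2 : ‖A xhat - b δ‖ ≤ δ := by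
      rw [hsol, norm_sub_rev]; exact hb δ hδ
    have h3 : ‖α δ • what‖ = α δ * ‖what‖ := by
      rw [norm_smul, Real.norm_eq_abs, abs_of_pos (hα δ hδ)]
    linarith
  have hu2 : ‖u‖ ^ 2 ≤ 2 * δ ^ 2 + 2 * (α δ) ^ 2 * ‖what‖ ^ 2 := by
    nlinarith [norm_nonneg u, sq_nonneg (δ - α δ * ‖what‖), norm_nonneg what,
      (hα δ hδ).le, hδ.le]
  have hc2 : (0 : ℝ) < 2 * γ ^ 2 * γΔ δ := by have := hγΔ δ hδ; positivity
  have hgoal : e δ / (γ * γΔ δ) + δ ^ 2 / (2 * γ ^ 2 * γΔ δ)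
      + α δ ^ 2 / (2 * γ ^ 2 * γΔ δ) * ‖what‖ ^ 2
      = (2 * γ * e δ + δ ^ 2 + α δ ^ 2 * ‖what‖ ^ 2) / (2 * γ ^ 2 * γΔ δ) := by
    have h1 : γ ≠ 0 := hγ.ne'
    have h2 : γΔ δ ≠ 0 := (hγΔ δ hδ).ne'
    field_simp
  rw [hgoal, le_div_iff₀ hc2]
  nlinarith [hγ, hγΔ δ hδ]
end

section
/- Suppose the linear inverse-problem setup and accuracy assumptions hold and there exists a collection X̃ ⊂ X̂ of points satisfying the semi-strong source condition such that the union of the corresponding neighbourhoods U^{x̂} over x̂ ∈ X̃ covers X̂. Suppose further that U_ρ := {x ∈ X : ‖A(x − x̂)‖ ≤ ρ, R(x) ≤ R(x̂) + ρ} is weakly (or weakly-*) compact for some ρ > 0 and each U^{x̂}, x̂ ∈ X̃, is correspondingly weakly (or weakly-*) open. If (α_δ², δ², e_δ)/min{α_δ, γ_δ} → 0 as δ ↘ 0, then dist(x_δ, X̂) → 0 as δ ↘ 0. -/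
open scoped RealInnerProductSpace
open Filter Topology Metric

/-!
Testing the accuracy estimate against one fixed `x̂₀ ∈ X̂` and using its source condition shows
`A x_δ → b̂` and `limsup R x_δ ≤ R x̂₀`, so `x_δ` eventually lies in the weakly compact set `U_ρ`.
Sublevel sets of convex lower semicontinuous functions are weakly closed, so every weak cluster
point `x*` of `x_δ` has `A x* = b̂` and `R x* ≤ R x̂₀`; it therefore satisfies the source condition
with the same `ŵ₀`, lies in `X̂`, and hence in some weakly open `U^{x̂}`. There the semi-strong
source condition, played against the accuracy estimate and Young's inequality, gives
`γ γ_δ dist²(x_δ, X̂) ≤ e_δ + (δ² + α_δ² ‖ŵ‖²) / (2γ)`, which is `o(γ_δ)`. Compactness of `U_ρ`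
turns these local bounds into `dist(x_δ, X̂) → 0`.
-/

theorem IsCompact.eventually_of_forall_mapClusterPt {ι T : Type*} [TopologicalSpace T]
    {l : Filter ι} {y : ι → T} {K : Set T} (hK : IsCompact K) (hyK : ∀ᶠ i in l, y i ∈ K)
    {P : ι → Prop} (hP : ∀ p ∈ K, MapClusterPt p l y → ∃ V ∈ 𝓝 p, ∀ᶠ i in l, y i ∈ V → P i) :
    ∀ᶠ i in l, P i := by
  by_contra hnot
  have : (l ⊓ 𝓟 {i | ¬P i}).NeBot := frequently_iff_neBot.1 (not_eventually.1 hnot)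
  obtain ⟨p, hpK, hp⟩ := hK.exists_mapClusterPt (f := l ⊓ 𝓟 {i | ¬P i}) (u := y)
    (le_principal_iff.2 (hyK.filter_mono inf_le_left))
  obtain ⟨V, hV, hVP⟩ := hP p hpK (hp.mono inf_le_left)
  obtain ⟨i, hiV, hiP, hnP⟩ := ((hp.frequently hV).and_eventually
    ((hVP.filter_mono inf_le_left).and (mem_inf_of_right (mem_principal_self _)))).exists
  exact hnP (hiP hiV)

theorem Convex.mem_of_mapClusterPt_toWeakSpace {ι E : Type*} [AddCommGroup E] [Module ℝ E]
    [TopologicalSpace E] [IsTopologicalAddGroup E] [ContinuousSMul ℝ E] [LocallyConvexSpace ℝ E]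
    {l : Filter ι} {x : ι → E} {z : E} {s : Set E} (hs : Convex ℝ s) (hs' : IsClosed s)
    (hz : MapClusterPt (toWeakSpace ℝ E z) l (toWeakSpace ℝ E ∘ x)) (hx : ∀ᶠ i in l, x i ∈ s) :
    z ∈ s := by
  have hclosed : IsClosed (toWeakSpace ℝ E '' s) := by
    rw [← hs'.closure_eq, hs.toWeakSpace_closure ℝ]
    exact isClosed_closure
  obtain ⟨z', hz's, hz'z⟩ :=
    hclosed.mem_of_mapClusterPt hz (hx.mono fun i hi => Set.mem_image_of_mem _ hi)
  rwa [← (toWeakSpace ℝ E).injective hz'z]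

theorem convex_setOf_le_coe {E : Type*} [AddCommGroup E] [Module ℝ E] {R : E → EReal}
    (hR : ∀ p q : E, ∀ t : ℝ, 0 ≤ t → t ≤ 1 →
      R (t • p + (1 - t) • q) ≤ (t : EReal) * R p + ((1 - t : ℝ) : EReal) * R q) (c : ℝ) :
    Convex ℝ {z | R z ≤ c} := by
  intro p hp q hq a b ha hb hab
  obtain rfl : b = 1 - a := by linarith
  calc R (a • p + (1 - a) • q) ≤ (a : EReal) * R p + ((1 - a : ℝ) : EReal) * R q :=
        hR p q a ha (by linarith)
    _ ≤ (a : EReal) * c + ((1 - a : ℝ) : EReal) * c :=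
        add_le_add (mul_le_mul_of_nonneg_left hp (mod_cast ha))
          (mul_le_mul_of_nonneg_left hq (mod_cast hb))
    _ = c := by norm_cast; ring_nf

theorem tendsto_div_of_tendsto_div_min {ι : Type*} {l : Filter ι} {f g h : ι → ℝ}
    (hf : ∀ᶠ i in l, 0 ≤ f i) (hg : ∀ᶠ i in l, 0 < g i) (hh : ∀ᶠ i in l, 0 < h i)
    (hlim : Tendsto (fun i => f i / min (g i) (h i)) l (𝓝 0)) :
    Tendsto (fun i => f i / g i) l (𝓝 0) ∧ Tendsto (fun i => f i / h i) l (𝓝 0) := by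
  have hle {k : ι → ℝ} (hk : ∀ i, min (g i) (h i) ≤ k i) :
      Tendsto (fun i => f i / k i) l (𝓝 0) := by
    refine squeeze_zero' ?_ ?_ hlim
    · filter_upwards [hf, hg, hh] with i hf hg hh
      exact div_nonneg hf ((lt_min hg hh).trans_le (hk i)).le
    · filter_upwards [hf, hg, hh] with i hf hg hh
      exact div_le_div_of_nonneg_left hf (lt_min hg hh) (hk i)
  exact ⟨hle fun i => min_le_left _ _, hle fun i => min_le_right _ _⟩

theorem neg_sq_div_le_inner_add_mul_norm_sq {Y : Type*} [NormedAddCommGroup Y]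
    [InnerProductSpace ℝ Y] {γ : ℝ} (hγ : 0 < γ) (c v : Y) :
    -(‖c‖ ^ 2 / (4 * γ)) ≤ ⟪c, v⟫ + γ * ‖v‖ ^ 2 := by
  have := neg_le_of_abs_le (abs_real_inner_le_norm c v)
  rw [neg_le, le_div_iff₀ (by positivity)]
  nlinarith [sq_nonneg (‖c‖ - 2 * γ * ‖v‖)]

section Tikhonov

variable {X Y : Type*} [NormedAddCommGroup X] [NormedSpace ℝ X]
  [NormedAddCommGroup Y] [InnerProductSpace ℝ Y] {A : X →L[ℝ] Y} {R : X → EReal}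
  {bhat : Y} {xh : X}

/-- `0 ∈ A* w + ∂R z`, with the adjoint moved onto `v - z`. -/
def SourceCondition (A : X →L[ℝ] Y) (R : X → EReal) (w : Y) (z : X) : Prop :=
  ∀ v : X, R z + ((-⟪w, A (v - z)⟫ : ℝ) : EReal) ≤ R v

theorem SourceCondition.ne_top {w : Y} {z p : X} (h : SourceCondition A R w z) (hp : R p ≠ ⊤) :
    R z ≠ ⊤ := by
  intro hz
  have := h p
  rw [hz, EReal.top_add_coe, top_le_iff] at this
  exact hp this

theorem SourceCondition.of_map_eq_of_le {w : Y} {z z' : X} (h : SourceCondition A R w z)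
    (hA : A z' = A z) (hR : R z' ≤ R z) : SourceCondition A R w z' := by
  intro v
  rw [map_sub, hA, ← map_sub]
  exact (add_le_add_left hR _).trans (h v)

noncomputable def tikhonov (A : X →L[ℝ] Y) (R : X → EReal) (b : Y) (α : ℝ) (z : X) : EReal :=
  ((2⁻¹ * ‖A z - b‖ ^ 2 : ℝ) : EReal) + (α : EReal) * R z

section FixedData

variable {b : Y} {α e δ : ℝ} {z : X}

theorem ne_top_and_toReal_le_of_tikhonov_le (hα : 0 < α) (hz : R z ≠ ⊥) (hxh : R xh ≠ ⊤)
    (hxh' : R xh ≠ ⊥) (h : tikhonov A R b α z ≤ tikhonov A R b α xh + e) :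
    R z ≠ ⊤ ∧ 2⁻¹ * ‖A z - b‖ ^ 2 + α * (R z).toReal
      ≤ 2⁻¹ * ‖A xh - b‖ ^ 2 + α * (R xh).toReal + e := by
  rw [tikhonov, tikhonov, ← EReal.coe_toReal hxh hxh'] at h
  induction hRz : R z using EReal.rec with
  | bot => exact absurd hRz hz
  | top =>
    rw [hRz, EReal.coe_mul_top_of_pos (mod_cast hα), EReal.coe_add_top] at h
    exact absurd h (by norm_cast)
  | coe r =>
    rw [hRz] at h
    exact ⟨EReal.coe_ne_top r, mod_cast h⟩

theorem norm_sub_sq_le_of_tikhonov_le {w : Y} (hα : 0 < α) (hR : ∀ p, R p ≠ ⊥)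
    (hb : ‖b - bhat‖ ≤ δ) (hxh : A xh = bhat) (hsrc : SourceCondition A R w xh)
    (hxh' : R xh ≠ ⊤) (h : tikhonov A R b α z ≤ tikhonov A R b α xh + e) :
    ‖A z - b‖ ^ 2 ≤ 4 * δ ^ 2 + 6 * ‖w‖ ^ 2 * α ^ 2 + 4 * e := by
  obtain ⟨hz, hacc⟩ := ne_top_and_toReal_le_of_tikhonov_le hα (hR z) hxh' (hR xh) h
  have hsrc' : (R xh).toReal + -⟪w, A (z - xh)⟫ ≤ (R z).toReal := by
    have := hsrc z
    rw [← EReal.coe_toReal hxh' (hR xh), ← EReal.coe_toReal hz (hR z)] at this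
    exact_mod_cast this
  have hxhb : ‖A xh - b‖ ≤ δ := by rwa [hxh, norm_sub_rev]
  have hAz : ‖A (z - xh)‖ ≤ ‖A z - b‖ + δ := by
    rw [map_sub, hxh, ← sub_add_sub_cancel (A z) b bhat]
    exact (norm_add_le _ _).trans (add_le_add le_rfl hb)
  have hinner : ⟪w, A (z - xh)⟫ ≤ ‖w‖ * (‖A z - b‖ + δ) :=
    (real_inner_le_norm _ _).trans (mul_le_mul_of_nonneg_left hAz (norm_nonneg _))
  nlinarith [sq_nonneg (‖A z - b‖ - 2 * α * ‖w‖), sq_nonneg (α * ‖w‖ - δ),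
    mul_le_mul_of_nonneg_left hinner hα.le, pow_le_pow_left₀ (norm_nonneg _) hxhb 2,
    norm_nonneg w, norm_nonneg (A z - b)]

theorem le_of_tikhonov_le_of_semiStrong {w : Y} {γ s : ℝ} (hα : 0 < α) (hγ : 0 < γ)
    (hR : ∀ p, R p ≠ ⊥) (hb : ‖b - bhat‖ ≤ δ) (hxh : A xh = bhat) (hxh' : R xh ≠ ⊤)
    (hacc : tikhonov A R b α z ≤ tikhonov A R b α xh + e)
    (hsemi : ((2⁻¹ * ‖A xh - b‖ ^ 2 + ⟪A xh - b - α • w, A (z - xh)⟫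
        + γ * ‖A (z - xh)‖ ^ 2 + s : ℝ) : EReal) + (α : EReal) * R xh ≤ tikhonov A R b α z) :
    s ≤ e + (δ ^ 2 + α ^ 2 * ‖w‖ ^ 2) / (2 * γ) := by
  obtain ⟨hz, hacc⟩ := ne_top_and_toReal_le_of_tikhonov_le hα (hR z) hxh' (hR xh) hacc
  rw [tikhonov, ← EReal.coe_toReal hxh' (hR xh), ← EReal.coe_toReal hz (hR z)] at hsemi
  have hsemi' : 2⁻¹ * ‖A xh - b‖ ^ 2 + ⟪A xh - b - α • w, A (z - xh)⟫ + γ * ‖A (z - xh)‖ ^ 2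
      + s + α * (R xh).toReal ≤ 2⁻¹ * ‖A z - b‖ ^ 2 + α * (R z).toReal := mod_cast hsemi
  have hc : ‖A xh - b - α • w‖ ≤ δ + α * ‖w‖ := by
    refine (norm_sub_le _ _).trans (add_le_add ?_ ?_)
    · rwa [hxh, norm_sub_rev]
    · rw [norm_smul, Real.norm_of_nonneg hα.le]
  have hyoung := neg_sq_div_le_inner_add_mul_norm_sq hγ (A xh - b - α • w) (A (z - xh))
  have hc' : ‖A xh - b - α • w‖ ^ 2 / (4 * γ) ≤ (δ ^ 2 + α ^ 2 * ‖w‖ ^ 2) / (2 * γ) := by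
    rw [div_le_div_iff₀ (by positivity) (by positivity)]
    nlinarith [pow_le_pow_left₀ (norm_nonneg _) hc 2, sq_nonneg (δ - α * ‖w‖)]
  linarith

end FixedData

theorem map_eq_and_le_of_mapClusterPt_toWeakSpace {ι : Type*} {l : Filter ι} {x : ι → X} {z : X}
    (hconv : ∀ p q : X, ∀ t : ℝ, 0 ≤ t → t ≤ 1 →
      R (t • p + (1 - t) • q) ≤ (t : EReal) * R p + ((1 - t : ℝ) : EReal) * R q)
    (hlsc : LowerSemicontinuous R) (hAx : Tendsto (fun i => A (x i)) l (𝓝 (A xh)))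
    (hRx : ∀ c, R xh < c → ∀ᶠ i in l, R (x i) ≤ c)
    (hz : MapClusterPt (toWeakSpace ℝ X z) l (toWeakSpace ℝ X ∘ x)) :
    A z = A xh ∧ R z ≤ R xh := by
  constructor
  · refine eq_of_forall_dist_le fun η hη => ?_
    refine (convex_closedBall (A xh) η |>.linear_preimage A.toLinearMap)
      |>.mem_of_mapClusterPt_toWeakSpace (isClosed_closedBall.preimage A.continuous) hz ?_
    exact hAx.eventually (closedBall_mem_nhds _ hη)
  · refine EReal.le_of_forall_lt_iff_le.1 fun c hc => ?_
    exact (convex_setOf_le_coe hconv c).mem_of_mapClusterPt_toWeakSpace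
      (hlsc.isClosed_preimage c) hz (hRx c hc)

variable {b : ℝ → Y} {α e : ℝ → ℝ} {x : ℝ → X}

theorem tendsto_map_of_tikhonov_le {w : Y} (hb : ∀ δ, 0 < δ → ‖b δ - bhat‖ ≤ δ)
    (hα : ∀ δ, 0 < δ → 0 < α δ) (hR : ∀ p, R p ≠ ⊥) (hxh : A xh = bhat)
    (hsrc : SourceCondition A R w xh) (hxh' : R xh ≠ ⊤)
    (hacc : ∀ δ, 0 < δ → tikhonov A R (b δ) (α δ) (x δ) ≤ tikhonov A R (b δ) (α δ) xh + e δ)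
    (hα0 : Tendsto α (𝓝[>] 0) (𝓝 0)) (heα : Tendsto (fun δ => e δ / α δ) (𝓝[>] 0) (𝓝 0)) :
    Tendsto (fun δ => A (x δ)) (𝓝[>] 0) (𝓝 bhat) := by
  have he0 : Tendsto e (𝓝[>] 0) (𝓝 0) := by
    have h := heα.mul hα0
    rw [zero_mul] at h
    exact h.congr' (eventually_mem_nhdsWithin.mono fun δ hδ => div_mul_cancel₀ _ (hα δ hδ).ne')
  have hδ0 : Tendsto (fun δ : ℝ => δ) (𝓝[>] 0) (𝓝 0) :=
    tendsto_nhdsWithin_of_tendsto_nhds tendsto_id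
  have hbound : Tendsto (fun δ => √(4 * δ ^ 2 + 6 * ‖w‖ ^ 2 * α δ ^ 2 + 4 * e δ) + δ)
      (𝓝[>] 0) (𝓝 0) := by
    simpa using ((((hδ0.pow 2).const_mul 4).add ((hα0.pow 2).const_mul _)).add
      (he0.const_mul 4)).sqrt.add hδ0
  rw [tendsto_iff_norm_sub_tendsto_zero]
  refine squeeze_zero' (.of_forall fun _ => norm_nonneg _) ?_ hbound
  filter_upwards [eventually_mem_nhdsWithin] with δ hδ
  have hsq := norm_sub_sq_le_of_tikhonov_le (hα δ hδ) hR (hb δ hδ) hxh hsrc hxh' (hacc δ hδ)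
  calc ‖A (x δ) - bhat‖ ≤ ‖A (x δ) - b δ‖ + ‖b δ - bhat‖ := norm_sub_le_norm_sub_add_norm_sub _ _ _
    _ ≤ _ := add_le_add (Real.le_sqrt_of_sq_le hsq) (hb δ hδ)

theorem eventually_le_of_tikhonov_le (hb : ∀ δ, 0 < δ → ‖b δ - bhat‖ ≤ δ)
    (hα : ∀ δ, 0 < δ → 0 < α δ) (hR : ∀ p, R p ≠ ⊥) (hxh : A xh = bhat) (hxh' : R xh ≠ ⊤)
    (hacc : ∀ δ, 0 < δ → tikhonov A R (b δ) (α δ) (x δ) ≤ tikhonov A R (b δ) (α δ) xh + e δ)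
    (hδα : Tendsto (fun δ => δ ^ 2 / α δ) (𝓝[>] 0) (𝓝 0))
    (heα : Tendsto (fun δ => e δ / α δ) (𝓝[>] 0) (𝓝 0)) {c : EReal} (hc : R xh < c) :
    ∀ᶠ δ in 𝓝[>] 0, R (x δ) ≤ c := by
  obtain ⟨c', hxhc', hc'c⟩ := EReal.lt_iff_exists_real_btwn.1 hc
  rw [← EReal.coe_toReal hxh' (hR xh), EReal.coe_lt_coe_iff] at hxhc'
  have hlim : Tendsto (fun δ => (R xh).toReal + (2⁻¹ * (δ ^ 2 / α δ) + e δ / α δ))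
      (𝓝[>] 0) (𝓝 (R xh).toReal) := by
    simpa using tendsto_const_nhds.add ((hδα.const_mul 2⁻¹).add heα)
  filter_upwards [eventually_mem_nhdsWithin, hlim.eventually_lt_const hxhc'] with δ hδ hδc
  obtain ⟨hz, hacc⟩ :=
    ne_top_and_toReal_le_of_tikhonov_le (hα δ hδ) (hR _) hxh' (hR xh) (hacc δ hδ)
  have hxhb : ‖A xh - b δ‖ ≤ δ := by rw [hxh, norm_sub_rev]; exact hb δ hδ
  have hgap : (R (x δ)).toReal - (R xh).toReal ≤ 2⁻¹ * (δ ^ 2 / α δ) + e δ / α δ := by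
    rw [mul_div_assoc', ← add_div, le_div_iff₀ (hα δ hδ)]
    nlinarith [sq_nonneg ‖A (x δ) - b δ‖, pow_le_pow_left₀ (norm_nonneg _) hxhb 2]
  calc R (x δ) = ((R (x δ)).toReal : EReal) := (EReal.coe_toReal hz (hR _)).symm
    _ ≤ c' := mod_cast (by linarith)
    _ ≤ c := hc'c.le

theorem eventually_infDist_lt_of_semiStrong {S V : Set X} {w : Y} {γ : ℝ} {γΔ : ℝ → ℝ}
    (hb : ∀ δ, 0 < δ → ‖b δ - bhat‖ ≤ δ) (hα : ∀ δ, 0 < δ → 0 < α δ)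
    (hγΔ : ∀ δ, 0 < δ → 0 < γΔ δ) (hR : ∀ p, R p ≠ ⊥) (hxh : A xh = bhat) (hxh' : R xh ≠ ⊤)
    (hacc : ∀ δ, 0 < δ → tikhonov A R (b δ) (α δ) (x δ) ≤ tikhonov A R (b δ) (α δ) xh + e δ)
    (hγ : 0 < γ)
    (hsemi : ∀ δ, 0 < δ → ∀ z ∈ V,
      ((2⁻¹ * ‖A xh - b δ‖ ^ 2 + ⟪A xh - b δ - α δ • w, A (z - xh)⟫
        + γ * ‖A (z - xh)‖ ^ 2 + γ * γΔ δ * infDist z S ^ 2 : ℝ) : EReal) + (α δ : EReal) * R xh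
        ≤ tikhonov A R (b δ) (α δ) z)
    (heγ : Tendsto (fun δ => e δ / γΔ δ) (𝓝[>] 0) (𝓝 0))
    (hδγ : Tendsto (fun δ => δ ^ 2 / γΔ δ) (𝓝[>] 0) (𝓝 0))
    (hαγ : Tendsto (fun δ => α δ ^ 2 / γΔ δ) (𝓝[>] 0) (𝓝 0)) {ε : ℝ} (hε : 0 < ε) :
    ∀ᶠ δ in 𝓝[>] 0, x δ ∈ V → infDist (x δ) S < ε := by
  have hlim : Tendsto (fun δ => (e δ / γΔ δ + (δ ^ 2 / γΔ δ + α δ ^ 2 / γΔ δ * ‖w‖ ^ 2)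
      / (2 * γ)) / γ) (𝓝[>] 0) (𝓝 0) := by
    simpa using (heγ.add ((hδγ.add (hαγ.mul_const _)).div_const _)).div_const γ
  filter_upwards [eventually_mem_nhdsWithin, hlim.eventually_lt_const (pow_pos hε 2)]
    with δ hδ hδε hxV
  have hs := le_of_tikhonov_le_of_semiStrong (hα δ hδ) hγ hR (hb δ hδ) hxh hxh' (hacc δ hδ)
    (hsemi δ hδ _ hxV)
  have hγΔδ := hγΔ δ hδ
  refine lt_of_pow_lt_pow_left₀ 2 hε.le (lt_of_le_of_lt ?_ hδε)
  calc infDist (x δ) S ^ 2 = γ * γΔ δ * infDist (x δ) S ^ 2 / (γ * γΔ δ) := by field_simp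
    _ ≤ (e δ + (δ ^ 2 + α δ ^ 2 * ‖w‖ ^ 2) / (2 * γ)) / (γ * γΔ δ) := by gcongr
    _ = _ := by field_simp

end Tikhonov

theorem semi_strong_source_condition_convergence_general
    {X Y : Type*} [NormedAddCommGroup X] [NormedSpace ℝ X]
    [NormedAddCommGroup Y] [InnerProductSpace ℝ Y]
    (A : X →L[ℝ] Y) (R : X → EReal)
    (hconv : ∀ p q : X, ∀ t : ℝ, 0 ≤ t → t ≤ 1 →
      R (t • p + (1 - t) • q) ≤ (t : EReal) * R p + ((1 - t : ℝ) : EReal) * R q)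
    (hproper : ∃ p, R p ≠ ⊤) (hnebot : ∀ p, R p ≠ ⊥)
    (hlsc : LowerSemicontinuous R)
    (bhat : Y) (b : ℝ → Y) (hb : ∀ δ : ℝ, 0 < δ → ‖b δ - bhat‖ ≤ δ)
    (α e : ℝ → ℝ) (hα : ∀ δ : ℝ, 0 < δ → 0 < α δ) (he : ∀ δ : ℝ, 0 < δ → 0 ≤ e δ)
    (γΔ : ℝ → ℝ) (hγΔ : ∀ δ : ℝ, 0 < δ → 0 < γΔ δ)
    (x : ℝ → X)
    -- the set X̂ of solutions satisfying the basic source condition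
    (Xhat : Set X)
    (hXhat : Xhat = {z : X | A z = bhat ∧
      ∃ w : Y, ∀ v : X, R z + ((-⟪w, A (v - z)⟫ : ℝ) : EReal) ≤ R v})
    -- accuracy of the approximate solutions
    (hacc : ∀ δ : ℝ, 0 < δ → ∀ xh ∈ Xhat,
      ((2⁻¹ * ‖A (x δ) - b δ‖ ^ 2 : ℝ) : EReal) + (α δ : EReal) * R (x δ)
        ≤ ((2⁻¹ * ‖A xh - b δ‖ ^ 2 : ℝ) : EReal) + (α δ : EReal) * R xh
          + (e δ : EReal))
    -- the collection X̃ ⊆ X̂ of points satisfying the semi-strong source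
    -- condition, with neighbourhoods U^{x̂} covering X̂
    (Xtilde : Set X) (hXtilde : Xtilde ⊆ Xhat)
    (U : X → Set X)
    (hcover : Xhat ⊆ ⋃ xh ∈ Xtilde, U xh)
    (hsemi : ∀ xh ∈ Xtilde, U xh ∈ nhds xh ∧
      ∃ (w : Y) (γ : ℝ), 0 < γ ∧
        (∀ v : X, R xh + ((-⟪w, A (v - xh)⟫ : ℝ) : EReal) ≤ R v) ∧
        ∀ δ : ℝ, 0 < δ → ∀ z ∈ U xh,
          ((2⁻¹ * ‖A xh - b δ‖ ^ 2 + ⟪A xh - b δ - α δ • w, A (z - xh)⟫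
              + γ * ‖A (z - xh)‖ ^ 2 + γ * γΔ δ * infDist z Xhat ^ 2 : ℝ) : EReal)
              + (α δ : EReal) * R xh
            ≤ ((2⁻¹ * ‖A z - b δ‖ ^ 2 : ℝ) : EReal) + (α δ : EReal) * R z)
    -- weak compactness of U_ρ and weak openness of the neighbourhoods U^{x̂}
    (ρ : ℝ) (hρ : 0 < ρ) (xh₀ : X) (hxh₀ : xh₀ ∈ Xhat)
    (hUρcpt : IsCompact (toWeakSpace ℝ X ''
      {z : X | ‖A (z - xh₀)‖ ≤ ρ ∧ R z ≤ R xh₀ + (ρ : EReal)}))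
    (hUopen : ∀ xh ∈ Xtilde, IsOpen (toWeakSpace ℝ X '' U xh))
    -- parameter convergence: (α_δ², δ², e_δ)/min{α_δ, γ_δ} → 0
    (hlim1 : Tendsto (fun δ => α δ ^ 2 / min (α δ) (γΔ δ)) (nhdsWithin 0 (Set.Ioi 0)) (nhds 0))
    (hlim2 : Tendsto (fun δ => δ ^ 2 / min (α δ) (γΔ δ)) (nhdsWithin 0 (Set.Ioi 0)) (nhds 0))
    (hlim3 : Tendsto (fun δ => e δ / min (α δ) (γΔ δ)) (nhdsWithin 0 (Set.Ioi 0)) (nhds 0)) :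
    Tendsto (fun δ => infDist (x δ) Xhat) (nhdsWithin 0 (Set.Ioi 0)) (nhds 0) := by
  obtain ⟨p, hp⟩ := hproper
  have hXhat' (z : X) : z ∈ Xhat ↔ A z = bhat ∧ ∃ w, SourceCondition A R w z := by
    rw [hXhat]; rfl
  have hfin : ∀ xh ∈ Xhat, R xh ≠ ⊤ := fun xh h => ((hXhat' xh).1 h).2.choose_spec.ne_top hp
  obtain ⟨hA₀, w₀, hw₀⟩ := (hXhat' xh₀).1 hxh₀
  have hpos : ∀ᶠ δ in 𝓝[>] (0 : ℝ), 0 < δ := eventually_mem_nhdsWithin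
  have hα' := hpos.mono hα
  have hγΔ' := hpos.mono hγΔ
  have hsq (f : ℝ → ℝ) : ∀ᶠ δ in 𝓝[>] (0 : ℝ), 0 ≤ f δ ^ 2 := .of_forall fun δ => sq_nonneg _
  obtain ⟨hαα, hαγ⟩ := tendsto_div_of_tendsto_div_min (hsq α) hα' hγΔ' hlim1
  obtain ⟨hδα, hδγ⟩ := tendsto_div_of_tendsto_div_min (hsq id) hα' hγΔ' hlim2
  obtain ⟨heα, heγ⟩ := tendsto_div_of_tendsto_div_min (hpos.mono he) hα' hγΔ' hlim3
  have hα0 : Tendsto α (𝓝[>] 0) (𝓝 0) :=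
    hαα.congr' (hα'.mono fun δ hδ => by rw [sq, mul_div_cancel_right₀ _ hδ.ne'])
  have hAx := tendsto_map_of_tikhonov_le hb hα hnebot hA₀ hw₀ (hfin xh₀ hxh₀)
    (fun δ hδ => hacc δ hδ xh₀ hxh₀) hα0 heα
  have hRx := fun c (hc : R xh₀ < c) => eventually_le_of_tikhonov_le hb hα hnebot hA₀
    (hfin xh₀ hxh₀) (fun δ hδ => hacc δ hδ xh₀ hxh₀) hδα heα hc
  refine tendsto_order.2
    ⟨fun a ha => .of_forall fun δ => ha.trans_le infDist_nonneg, fun ε hε => ?_⟩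
  refine hUρcpt.eventually_of_forall_mapClusterPt (y := toWeakSpace ℝ X ∘ x) ?_ ?_
  · have hρ' : R xh₀ < R xh₀ + ρ := by
      rw [← EReal.coe_toReal (hfin xh₀ hxh₀) (hnebot xh₀)]; exact_mod_cast lt_add_of_pos_right _ hρ
    filter_upwards [hAx.eventually (closedBall_mem_nhds _ hρ), hRx _ hρ'] with δ h1 h2
    exact ⟨x δ, ⟨by rwa [map_sub, hA₀, ← dist_eq_norm], h2⟩, rfl⟩
  · rintro _ ⟨z, -, rfl⟩ hz
    obtain ⟨hAz, hRz⟩ := map_eq_and_le_of_mapClusterPt_toWeakSpace hconv hlsc (hA₀ ▸ hAx) hRx hz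
    obtain ⟨xh, hxh, hzU⟩ := Set.mem_iUnion₂.1
      (hcover ((hXhat' z).2 ⟨hAz.trans hA₀, w₀, hw₀.of_map_eq_of_le hAz hRz⟩))
    have hxhXhat := hXtilde hxh
    obtain ⟨-, w, γ, hγ, -, hsemi⟩ := hsemi xh hxh
    refine ⟨_, (hUopen xh hxh).mem_nhds ⟨z, hzU, rfl⟩, ?_⟩
    filter_upwards [eventually_infDist_lt_of_semiStrong hb hα hγΔ hnebot
      ((hXhat' xh).1 hxhXhat).1 (hfin xh hxhXhat) (fun δ hδ => hacc δ hδ xh hxhXhat)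
      hγ hsemi heγ hδγ hαγ hε] with δ h ⟨z', hz', hz'x⟩
    exact h ((toWeakSpace ℝ X).injective hz'x ▸ hz')

/-- **Convergence to the solution set under semi-strong source conditions**
(Theorem `thm:linear:subreg:weak`).  In the linear inverse-problem setting,
let `X̂` be the set of points satisfying the basic source condition, and
suppose there is a collection `X̃ ⊆ X̂` of points, each satisfying the
semi-strong source condition with its own `ŵ`, factor `γ` and (δ-independent)
neighbourhood `U^{x̂}`, such that the neighbourhoods cover `X̂`.  Suppose
moreover that `U_ρ` is weakly compact for some `ρ > 0` and each `U^{x̂}` is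
weakly open.  If `(α_δ², δ², e_δ)/min{α_δ, γ_δ} → 0` as `δ ↘ 0`, then
`dist(x_δ, X̂) → 0` as `δ ↘ 0`. -/
theorem semi_strong_source_condition_convergence
    {X Y : Type*} [NormedAddCommGroup X] [NormedSpace ℝ X] [CompleteSpace X]
    [NormedAddCommGroup Y] [InnerProductSpace ℝ Y] [CompleteSpace Y]
    (A : X →L[ℝ] Y) (R : X → EReal)
    (hconv : ∀ p q : X, ∀ t : ℝ, 0 ≤ t → t ≤ 1 →
      R (t • p + (1 - t) • q) ≤ (t : EReal) * R p + ((1 - t : ℝ) : EReal) * R q)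
    (hproper : ∃ p, R p ≠ ⊤) (hnebot : ∀ p, R p ≠ ⊥)
    (hlsc : LowerSemicontinuous R)
    (bhat : Y) (b : ℝ → Y) (hb : ∀ δ : ℝ, 0 < δ → ‖b δ - bhat‖ ≤ δ)
    (α e : ℝ → ℝ) (hα : ∀ δ : ℝ, 0 < δ → 0 < α δ) (he : ∀ δ : ℝ, 0 < δ → 0 ≤ e δ)
    (γΔ : ℝ → ℝ) (hγΔ : ∀ δ : ℝ, 0 < δ → 0 < γΔ δ)
    (x : ℝ → X)
    -- the set X̂ of solutions satisfying the basic source condition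
    (Xhat : Set X)
    (hXhat : Xhat = {z : X | A z = bhat ∧
      ∃ w : Y, ∀ v : X, R z + ((-⟪w, A (v - z)⟫ : ℝ) : EReal) ≤ R v})
    -- accuracy of the approximate solutions
    (hacc : ∀ δ : ℝ, 0 < δ → ∀ xh ∈ Xhat,
      ((2⁻¹ * ‖A (x δ) - b δ‖ ^ 2 : ℝ) : EReal) + (α δ : EReal) * R (x δ)
        ≤ ((2⁻¹ * ‖A xh - b δ‖ ^ 2 : ℝ) : EReal) + (α δ : EReal) * R xh
          + (e δ : EReal))
    -- the collection X̃ ⊆ X̂ of points satisfying the semi-strong source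
    -- condition, with neighbourhoods U^{x̂} covering X̂
    (Xtilde : Set X) (hXtilde : Xtilde ⊆ Xhat)
    (U : X → Set X)
    (hcover : Xhat ⊆ ⋃ xh ∈ Xtilde, U xh)
    (hsemi : ∀ xh ∈ Xtilde, U xh ∈ nhds xh ∧
      ∃ (w : Y) (γ : ℝ), 0 < γ ∧
        (∀ v : X, R xh + ((-⟪w, A (v - xh)⟫ : ℝ) : EReal) ≤ R v) ∧
        ∀ δ : ℝ, 0 < δ → ∀ z ∈ U xh,
          ((2⁻¹ * ‖A xh - b δ‖ ^ 2 + ⟪A xh - b δ - α δ • w, A (z - xh)⟫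
              + γ * ‖A (z - xh)‖ ^ 2 + γ * γΔ δ * infDist z Xhat ^ 2 : ℝ) : EReal)
              + (α δ : EReal) * R xh
            ≤ ((2⁻¹ * ‖A z - b δ‖ ^ 2 : ℝ) : EReal) + (α δ : EReal) * R z)
    -- weak compactness of U_ρ and weak openness of the neighbourhoods U^{x̂}
    (ρ : ℝ) (hρ : 0 < ρ) (xh₀ : X) (hxh₀ : xh₀ ∈ Xhat)
    (hUρcpt : IsCompact (toWeakSpace ℝ X ''
      {z : X | ‖A (z - xh₀)‖ ≤ ρ ∧ R z ≤ R xh₀ + (ρ : EReal)}))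
    (hUopen : ∀ xh ∈ Xtilde, IsOpen (toWeakSpace ℝ X '' U xh))
    -- parameter convergence: (α_δ², δ², e_δ)/min{α_δ, γ_δ} → 0
    (hlim1 : Tendsto (fun δ => α δ ^ 2 / min (α δ) (γΔ δ)) (nhdsWithin 0 (Set.Ioi 0)) (nhds 0))
    (hlim2 : Tendsto (fun δ => δ ^ 2 / min (α δ) (γΔ δ)) (nhdsWithin 0 (Set.Ioi 0)) (nhds 0))
    (hlim3 : Tendsto (fun δ => e δ / min (α δ) (γΔ δ)) (nhdsWithin 0 (Set.Ioi 0)) (nhds 0)) :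
    Tendsto (fun δ => infDist (x δ) Xhat) (nhdsWithin 0 (Set.Ioi 0)) (nhds 0) :=
  semi_strong_source_condition_convergence_general A R hconv hproper hnebot hlsc bhat b hb α e hα he
    γΔ hγΔ x Xhat hXhat hacc Xtilde hXtilde U hcover hsemi ρ hρ xh₀ hxh₀ hUρcpt hUopen hlim1 hlim2
    hlim3
end

section
/- Let X = L²(Ω) for some Ω ⊂ ℝ^d, Y a Hilbert space, A : X → Y a bounded linear operator. Suppose Ax̂ = b̂ and x̂ satisfies the source condition x̂ ∈ −A*ŵ − N_{[0,∞)^Ω}(x̂) for some ŵ ∈ Y, where N_{[0,∞)^Ω}(x̂) is the normal cone in L²(Ω) to the set of a.e. nonnegative functions. For each δ > 0, suppose ‖b_δ − b̂‖_Y ≤ δ and let x_δ be a minimiser over a.e. nonnegative x ∈ L²(Ω) of (1/2)‖Ax − b_δ‖_Y² + (α_δ/2)‖x‖_X². Then ‖x_δ − x̂‖_X² ≤ δ²/(2α_δ) + (α_δ/2)‖ŵ‖_Y². In particular ‖x_δ − x̂‖ → 0 as δ ↘ 0 provided α_δ → 0 and δ²/α_δ → 0. -/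
open scoped RealInnerProductSpace
open Filter Topology Metric MeasureTheory

set_option maxHeartbeats 2000000

/-- **Norm-squared Tikhonov regularisation with non-negativity constraints** in
`X = L²(Ω)`, `Ω ⊆ ℝ^d`.  Suppose `A x̂ = b̂` and `x̂` satisfies the source
condition `x̂ ∈ -A*ŵ - N_{[0,∞)^Ω}(x̂)` for some `ŵ ∈ Y`, where the normal
cone to the non-negative cone `K = {z : 0 ≤ z a.e.}` at `x̂ ∈ K` is
`N_K(x̂) = {v : ⟪v, z - x̂⟫ ≤ 0 for all z ∈ K}`.  For every `δ > 0`, suppose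
`‖b_δ - b̂‖ ≤ δ` and `x_δ` minimises `½‖Az - b_δ‖² + (α_δ/2)‖z‖²` over
a.e.-non-negative `z ∈ L²(Ω)`.  Then
`‖x_δ - x̂‖² ≤ δ²/(2α_δ) + (α_δ/2)‖ŵ‖²`; in particular `‖x_δ - x̂‖ → 0` as
`δ ↘ 0` provided `α_δ → 0` and `δ²/α_δ → 0`. -/
theorem tikhonov_regularisation_nonneg_constraint
    {d : ℕ} (Ω : Set (EuclideanSpace ℝ (Fin d)))
    {Y : Type*} [NormedAddCommGroup Y] [InnerProductSpace ℝ Y] [CompleteSpace Y]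
    (A : Lp (α := EuclideanSpace ℝ (Fin d)) ℝ 2 (volume.restrict Ω) →L[ℝ] Y)
    (bhat : Y)
    (xhat : Lp (α := EuclideanSpace ℝ (Fin d)) ℝ 2 (volume.restrict Ω))
    (what : Y)
    (hsol : A xhat = bhat)
    (hxhatK : ∀ᵐ ω ∂(volume.restrict Ω), 0 ≤ xhat ω)
    -- source condition  x̂ ∈ -A*ŵ - N_{[0,∞)^Ω}(x̂)
    (hsource : ∃ v : Lp (α := EuclideanSpace ℝ (Fin d)) ℝ 2 (volume.restrict Ω),
      (∀ z : Lp (α := EuclideanSpace ℝ (Fin d)) ℝ 2 (volume.restrict Ω),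
        (∀ᵐ ω ∂(volume.restrict Ω), 0 ≤ z ω) → ⟪v, z - xhat⟫ ≤ 0) ∧
      xhat = -(ContinuousLinearMap.adjoint A what) - v)
    (b : ℝ → Y) (hb : ∀ δ : ℝ, 0 < δ → ‖b δ - bhat‖ ≤ δ)
    (α : ℝ → ℝ) (hα : ∀ δ : ℝ, 0 < δ → 0 < α δ)
    (x : ℝ → Lp (α := EuclideanSpace ℝ (Fin d)) ℝ 2 (volume.restrict Ω))
    -- x_δ minimises ½‖Az - b_δ‖² + (α_δ/2)‖z‖² over the non-negative cone
    (hxK : ∀ δ : ℝ, 0 < δ → ∀ᵐ ω ∂(volume.restrict Ω), 0 ≤ x δ ω)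
    (hxmin : ∀ δ : ℝ, 0 < δ →
      ∀ z : Lp (α := EuclideanSpace ℝ (Fin d)) ℝ 2 (volume.restrict Ω),
        (∀ᵐ ω ∂(volume.restrict Ω), 0 ≤ z ω) →
        2⁻¹ * ‖A (x δ) - b δ‖ ^ 2 + α δ / 2 * ‖x δ‖ ^ 2
          ≤ 2⁻¹ * ‖A z - b δ‖ ^ 2 + α δ / 2 * ‖z‖ ^ 2) :
    (∀ δ : ℝ, 0 < δ →
      ‖x δ - xhat‖ ^ 2 ≤ δ ^ 2 / (2 * α δ) + α δ / 2 * ‖what‖ ^ 2) ∧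
    (Tendsto α (nhdsWithin 0 (Set.Ioi 0)) (nhds 0) →
      Tendsto (fun δ => δ ^ 2 / α δ) (nhdsWithin 0 (Set.Ioi 0)) (nhds 0) →
      Tendsto (fun δ => ‖x δ - xhat‖) (nhdsWithin 0 (Set.Ioi 0)) (nhds 0)) := by
  obtain ⟨v, hv, hxv⟩ := hsource
  have key : ∀ δ : ℝ, 0 < δ →
      ‖x δ - xhat‖ ^ 2 ≤ δ ^ 2 / (2 * α δ) + α δ / 2 * ‖what‖ ^ 2 := by
    intro δ hδ
    have hαδ := hα δ hδ
    set u := x δ with hu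
    set h := xhat - u with hh
    set r := A u - b δ with hr
    set e := b δ - bhat with he
    set s := A u - bhat with hs
    set c : ℝ := 2⁻¹ * ‖A h‖ ^ 2 + α δ / 2 * ‖h‖ ^ 2 with hc
    have hc0 : 0 ≤ c := by rw [hc]; positivity
    set g : ℝ := ⟪r, A h⟫ + α δ * ⟪u, h⟫ with hgdef
    clear_value c g
    -- variational inequality: g ≥ 0
    have hquad : ∀ t : ℝ, 0 < t → t ≤ 1 → 0 ≤ t * g + t ^ 2 * c := by
      intro t ht ht1
      have hzK : ∀ᵐ ω ∂(volume.restrict Ω), 0 ≤ (u + t • h) ω := by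
        filter_upwards [hxK δ hδ, hxhatK, Lp.coeFn_add u (t • h),
          Lp.coeFn_smul t h, Lp.coeFn_sub xhat u] with ω h1 h2 h3 h4 h5
        rw [h3]
        simp only [Pi.add_apply]
        rw [h4]
        simp only [Pi.smul_apply, smul_eq_mul]
        rw [h5]
        simp only [Pi.sub_apply]
        nlinarith
      have hmin := hxmin δ hδ (u + t • h) hzK
      have hAz : A (u + t • h) - b δ = r + t • (A h) := by
        simp [hr, map_add, _root_.map_smul]; abel
      have hn1 : ‖A (u + t • h) - b δ‖ ^ 2
          = ‖r‖ ^ 2 + 2 * (t * ⟪r, A h⟫) + t ^ 2 * ‖A h‖ ^ 2 := by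
        rw [hAz, @norm_add_sq_real, real_inner_smul_right, norm_smul]
        rw [Real.norm_eq_abs, abs_of_pos ht]
        ring
      have hn2 : ‖u + t • h‖ ^ 2
          = ‖u‖ ^ 2 + 2 * (t * ⟪u, h⟫) + t ^ 2 * ‖h‖ ^ 2 := by
        rw [@norm_add_sq_real, real_inner_smul_right, norm_smul]
        rw [Real.norm_eq_abs, abs_of_pos ht]
        ring
      rw [hn1, hn2] at hmin
      simp only [hgdef, hc]
      nlinarith [hmin]
    have hg0 : 0 ≤ g := by
      by_contra hneg
      push_neg at hneg
      set t : ℝ := min 1 (-g / (c + 1)) with htd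
      clear_value t
      have ht0 : 0 < t := by
        rw [htd]
        exact lt_min one_pos (div_pos (by linarith) (by linarith))
      have ht1 : t ≤ 1 := htd ▸ min_le_left _ _
      have h1 := hquad t ht0 ht1
      have htc : t * c ≤ (-g / (c + 1)) * c := by
        exact mul_le_mul_of_nonneg_right (htd ▸ min_le_right 1 (-g / (c + 1))) hc0
      have hlt : (-g / (c + 1)) * c < -g := by
        rw [div_mul_eq_mul_div, div_lt_iff₀ (by linarith)]
        nlinarith
      have hglt : g + t * c < 0 := by linarith
      have hneg2 : t * (g + t * c) < 0 := mul_neg_of_pos_of_neg ht0 hglt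
      nlinarith [h1, hneg2]
    -- rewrite g using the source condition
    have hAh : A h = -s := by
      simp [hh, hs, map_sub, hsol]
    have hrs : r = s - e := by simp [hr, hs, he]
    have hinner1 : ⟪r, A h⟫ = ⟪e, s⟫ - ‖s‖ ^ 2 := by
      rw [hAh, inner_neg_right, hrs, inner_sub_left, real_inner_self_eq_norm_sq]
      ring
    have hvh : -⟪v, h⟫ ≤ 0 := by
      have := hv u (hxK δ hδ)
      have heq : u - xhat = -h := by simp [hh]
      rw [heq, inner_neg_right] at this
      linarith
    have hxh : ⟪xhat, h⟫ ≤ ⟪what, s⟫ := by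
      rw [hxv, inner_sub_left, inner_neg_left,
        ContinuousLinearMap.adjoint_inner_left, hAh, inner_neg_right]
      linarith
    have hinner2 : ⟪u, h⟫ ≤ -‖h‖ ^ 2 + ⟪what, s⟫ := by
      have hu_eq : u = xhat - h := by rw [hh]; abel
      have : ⟪u, h⟫ = ⟪xhat, h⟫ - ‖h‖ ^ 2 := by
        rw [hu_eq, inner_sub_left, real_inner_self_eq_norm_sq]
      linarith
    -- combine
    have hmain : α δ * ‖h‖ ^ 2 ≤ ⟪e, s⟫ - ‖s‖ ^ 2 + α δ * ⟪what, s⟫ := by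
      have h1 : g ≤ ⟪e, s⟫ - ‖s‖ ^ 2 + α δ * (-‖h‖ ^ 2 + ⟪what, s⟫) := by
        rw [hgdef, hinner1]
        have := mul_le_mul_of_nonneg_left hinner2 (le_of_lt hαδ)
        linarith
      nlinarith [hg0]
    have h_es : ⟪e, s⟫ ≤ 2⁻¹ * ‖e‖ ^ 2 + 2⁻¹ * ‖s‖ ^ 2 := by
      nlinarith [sq_nonneg (‖e - s‖), @norm_sub_sq_real _ _ _ e s]
    have h_ws : α δ * ⟪what, s⟫ - 2⁻¹ * ‖s‖ ^ 2 ≤ 2⁻¹ * (α δ) ^ 2 * ‖what‖ ^ 2 := by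
      have hns : ‖α δ • what - s‖ ^ 2
          = ‖α δ • what‖ ^ 2 - 2 * ⟪α δ • what, s⟫ + ‖s‖ ^ 2 :=
        @norm_sub_sq_real _ _ _ (α δ • what) s
      rw [real_inner_smul_left, norm_smul, Real.norm_eq_abs, abs_of_pos hαδ] at hns
      nlinarith [sq_nonneg (‖α δ • what - s‖)]
    have h_e : ‖e‖ ^ 2 ≤ δ ^ 2 := by
      have := hb δ hδ
      nlinarith [norm_nonneg e]
    have hαh : α δ * ‖h‖ ^ 2 ≤ 2⁻¹ * δ ^ 2 + 2⁻¹ * (α δ) ^ 2 * ‖what‖ ^ 2 := by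
      nlinarith [hmain, h_es, h_ws, h_e]
    have hnorm : ‖u - xhat‖ = ‖h‖ := by rw [hh, norm_sub_rev]
    rw [hnorm]
    have hval : α δ * (δ ^ 2 / (2 * α δ) + α δ / 2 * ‖what‖ ^ 2)
        = 2⁻¹ * δ ^ 2 + 2⁻¹ * (α δ) ^ 2 * ‖what‖ ^ 2 := by
      field_simp
    have hfin : α δ * ‖h‖ ^ 2 ≤ α δ * (δ ^ 2 / (2 * α δ) + α δ / 2 * ‖what‖ ^ 2) := by
      rw [hval]; linarith
    exact le_of_mul_le_mul_left hfin hαδ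
  refine ⟨key, ?_⟩
  intro h1 h2
  have hsq : Tendsto (fun δ => ‖x δ - xhat‖ ^ 2) (nhdsWithin 0 (Set.Ioi 0)) (nhds 0) := by
    have hupper : Tendsto (fun δ => δ ^ 2 / (2 * α δ) + α δ / 2 * ‖what‖ ^ 2)
        (nhdsWithin 0 (Set.Ioi 0)) (nhds 0) := by
      have e1 : Tendsto (fun δ => δ ^ 2 / (2 * α δ)) (nhdsWithin 0 (Set.Ioi 0)) (nhds 0) := by
        have := h2.div_const 2
        simp only [zero_div] at this
        refine this.congr (fun δ => ?_)
        rw [div_div, mul_comm]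
      have e2 : Tendsto (fun δ => α δ / 2 * ‖what‖ ^ 2) (nhdsWithin 0 (Set.Ioi 0)) (nhds 0) := by
        have := (h1.div_const 2).mul_const (‖what‖ ^ 2)
        simpa using this
      simpa using e1.add e2
    refine squeeze_zero' ?_ ?_ hupper
    · filter_upwards with δ using by positivity
    · filter_upwards [self_mem_nhdsWithin] with δ hδ
      exact key δ hδ
  have := hsq.sqrt
  simp only [Real.sqrt_zero] at this
  refine this.congr (fun δ => ?_)
  exact Real.sqrt_sq (norm_nonneg _)
end

section
/- Let A ∈ ℝ^{m×n}, and suppose (x̂, d̂) is strictly complementary and satisfies the ℓ¹ source condition Ax̂ = b̂, d̂ ∈ range A* ∩ Sign x̂. Let F_δ(x) := (1/2)‖Ax − b_δ‖₂² + α_δ‖x‖₁ on ℝⁿ for some α_δ ∈ (0, 1/2) and b_δ ∈ ℝ^m. Then F_δ is (A, α_δ)-strongly locally subdifferentiable at x̂ for x̂* := A*(Ax̂ − b_δ) + α_δ d̂ ∈ ∂F_δ(x̂) with respect to the set X̂ of ℓ¹-norm-minimising solutions of Ax = b̂, in some open neighbourhood U of x̂, where both the factor γ of strong local subdifferentiability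 and U are independent of δ. -/
open scoped RealInnerProductSpace
open Metric Finset

/-!
The ℓ¹ Bregman distance `‖z‖₁ - ‖x̂‖₁ - ⟪d̂, z - x̂⟫` is a sum of nonnegative coordinate terms, the
`k`-th one at least `(1 - |d̂_k|) |z_k|`. By strict complementarity this dominates any multiple of
`∑_{x̂_k = 0} z_k²` close to `x̂`. On the other hand the source condition `d̂ = A* w` makes every
solution of `A p = b̂` with `d̂ ∈ Sign p` an ℓ¹-minimiser. Projecting `z - x̂` orthogonally onto
`ker A ∩ {v : v_k = 0 whenever x̂_k = 0}` yields such a `p = x̂ + q` near `x̂`, and injectivity of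
`v ↦ (A v, (v_k)_{x̂_k = 0})` on the orthogonal complement gives the error bound
`dist(z, X̂)² ≤ C (‖A(z - x̂)‖² + ∑_{x̂_k = 0} z_k²)`. Since
`F_δ(z) - F_δ(x̂) - ⟪x̂*, z - x̂⟫ = ½‖A(z - x̂)‖² + α_δ · (Bregman distance)`, both terms of
`dist(z, X̂)²` are absorbed for `γ = 1/(2 + C)`, uniformly in `α_δ < 1/2` and `b_δ`.
-/

lemma exists_pos_forall_le_of_pos {ι : Type*} [Finite ι] {p : ι → Prop} {f : ι → ℝ}
    (hf : ∀ k, p k → 0 < f k) : ∃ ε > 0, ∀ k, p k → ε ≤ f k := by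
  classical
  cases isEmpty_or_nonempty ι
  · exact ⟨1, one_pos, fun k => isEmptyElim k⟩
  set g : ι → ℝ := fun k => if p k then f k else 1
  have hg : ∀ k, 0 < g k := fun k => by
    by_cases hk : p k <;> simp [g, hk, hf k]
  obtain ⟨k₀, hk₀⟩ := Finite.exists_min g
  exact ⟨g k₀, hg k₀, fun k hk => by simpa [g, hk] using hk₀ k⟩

lemma exists_norm_sub_starProjection_ker_le {E F : Type*} [NormedAddCommGroup E]
    [InnerProductSpace ℝ E] [FiniteDimensional ℝ E] [NormedAddCommGroup F] [NormedSpace ℝ F]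
    (L : E →L[ℝ] F) :
    ∃ C > 0, ∀ v, ‖v - (LinearMap.ker (L : E →ₗ[ℝ] F)).starProjection v‖ ≤ C * ‖L v‖ := by
  set K := LinearMap.ker (L : E →ₗ[ℝ] F)
  have hinj : LinearMap.ker ((L : E →ₗ[ℝ] F) ∘ₗ Kᗮ.subtype) = ⊥ := by
    rw [Submodule.eq_bot_iff]
    rintro ⟨u, hu⟩ hLu
    exact Subtype.ext (inner_self_eq_zero.1 (hu u hLu))
  obtain ⟨C, hC, hL⟩ := LinearMap.exists_antilipschitzWith _ hinj
  refine ⟨C, hC, fun v => ?_⟩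
  have hq : L (K.starProjection v) = 0 := K.starProjection_apply_mem v
  simpa [hq] using hL.le_mul_norm (map_zero _) ⟨_, K.sub_starProjection_mem_orthogonal v⟩

lemma half_norm_apply_sub_sq_eq {E F : Type*} [NormedAddCommGroup E] [InnerProductSpace ℝ E]
    [CompleteSpace E] [NormedAddCommGroup F] [InnerProductSpace ℝ F] [CompleteSpace F]
    (A : E →L[ℝ] F) (b : F) (x z : E) :
    2⁻¹ * ‖A z - b‖ ^ 2 =
      2⁻¹ * ‖A x - b‖ ^ 2 + ⟪A.adjoint (A x - b), z - x⟫ + 2⁻¹ * ‖A (z - x)‖ ^ 2 := by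
  rw [ContinuousLinearMap.adjoint_inner_left, map_sub,
    show A z - b = (A x - b) + (A z - A x) by abel, norm_add_sq_real]
  ring

/-- The subdifferential of `|·|` at `a`; `Sign x` is the product of the `signSet (x k)`. -/
def signSet (a : ℝ) : Set ℝ :=
  {c | (a < 0 → c = -1) ∧ (0 < a → c = 1) ∧ (a = 0 → |c| ≤ 1)}

section signSet

variable {a b c : ℝ}

lemma abs_le_one_of_mem_signSet (h : c ∈ signSet a) : |c| ≤ 1 := by
  rcases lt_trichotomy a 0 with ha | ha | ha
  · simp [h.1 ha]
  · exact h.2.2 ha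
  · simp [h.2.1 ha]

lemma mul_eq_abs_of_mem_signSet (h : c ∈ signSet a) : c * a = |a| := by
  rcases lt_trichotomy a 0 with ha | rfl | ha
  · rw [h.1 ha, abs_of_neg ha, neg_one_mul]
  · simp
  · rw [h.2.1 ha, abs_of_pos ha, one_mul]

lemma mem_signSet_of_abs_sub_lt (h : c ∈ signSet a) (hb : |b - a| < |a|) : c ∈ signSet b := by
  obtain ⟨hneg, hpos, -⟩ := h
  rw [abs_lt] at hb
  refine ⟨fun hb0 => hneg ?_, fun hb0 => hpos ?_, fun hb0 => ?_⟩ <;>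
    cases abs_cases a <;> linarith

lemma mul_le_abs_of_abs_le_one (hc : |c| ≤ 1) (b : ℝ) : c * b ≤ |b| :=
  (le_abs_self _).trans <| (abs_mul c b).trans_le <| mul_le_of_le_one_left (abs_nonneg b) hc

end signSet

section l1

variable {ι : Type*} [Fintype ι]

lemma inner_eq_sum_mul (x y : EuclideanSpace ℝ ι) : ⟪x, y⟫ = ∑ k, x k * y k := by
  simp [PiLp.inner_apply, mul_comm]

lemma inner_le_sum_abs {d : EuclideanSpace ℝ ι} (hd : ∀ k, |d k| ≤ 1) (y : EuclideanSpace ℝ ι) :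
    ⟪d, y⟫ ≤ ∑ k, |y k| := by
  rw [inner_eq_sum_mul]
  exact sum_le_sum fun k _ => mul_le_abs_of_abs_le_one (hd k) (y k)

lemma inner_eq_sum_abs {d y : EuclideanSpace ℝ ι} (hd : ∀ k, d k ∈ signSet (y k)) :
    ⟪d, y⟫ = ∑ k, |y k| := by
  rw [inner_eq_sum_mul]
  exact sum_congr rfl fun k _ => mul_eq_abs_of_mem_signSet (hd k)

def l1MinimalSolutions {F : Type*} [NormedAddCommGroup F] [NormedSpace ℝ F]
    (A : EuclideanSpace ℝ ι →L[ℝ] F) (b : F) : Set (EuclideanSpace ℝ ι) :=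
  {z | A z = b ∧ ∀ v, A v = b → ∑ k, |z k| ≤ ∑ k, |v k|}

noncomputable def bregmanL1 (d x z : EuclideanSpace ℝ ι) : ℝ :=
  ∑ k, |z k| - ∑ k, |x k| - ⟪d, z - x⟫

variable {d x : EuclideanSpace ℝ ι}

lemma bregmanL1_eq_sum (hd : ∀ k, d k ∈ signSet (x k)) (z : EuclideanSpace ℝ ι) :
    bregmanL1 d x z = ∑ k, (|z k| - d k * z k) := by
  rw [bregmanL1, inner_sub_right, inner_eq_sum_abs hd, inner_eq_sum_mul, sum_sub_distrib]
  ring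

lemma sum_one_sub_abs_mul_abs_le_bregmanL1 (hd : ∀ k, d k ∈ signSet (x k))
    (z : EuclideanSpace ℝ ι) :
    ∑ k ∈ univ.filter (fun k => x k = 0), (1 - |d k|) * |z k| ≤ bregmanL1 d x z := by
  have hterm : ∀ k, (1 - |d k|) * |z k| ≤ |z k| - d k * z k := fun k => by
    linarith [(le_abs_self (d k * z k)).trans_eq (abs_mul (d k) (z k))]
  rw [bregmanL1_eq_sum hd]
  calc _ ≤ ∑ k ∈ univ.filter (fun k => x k = 0), (|z k| - d k * z k) :=
        sum_le_sum fun k _ => hterm k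
    _ ≤ ∑ k, (|z k| - d k * z k) :=
        sum_le_sum_of_subset_of_nonneg (filter_subset _ _) fun k _ _ =>
          sub_nonneg.2 (mul_le_abs_of_abs_le_one (abs_le_one_of_mem_signSet (hd k)) (z k))

lemma mul_sum_sq_le_mul_bregmanL1 (hd : ∀ k, d k ∈ signSet (x k)) {ε r : ℝ} (hr : 0 ≤ r)
    (hε : ∀ k, x k = 0 → ε ≤ 1 - |d k|) {z : EuclideanSpace ℝ ι}
    (hz : ∀ k, x k = 0 → |z k| ≤ r) :
    ε * ∑ k ∈ univ.filter (fun k => x k = 0), z k ^ 2 ≤ r * bregmanL1 d x z := by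
  calc ε * ∑ k ∈ univ.filter (fun k => x k = 0), z k ^ 2
      ≤ r * ∑ k ∈ univ.filter (fun k => x k = 0), (1 - |d k|) * |z k| := by
        rw [mul_sum, mul_sum]
        refine sum_le_sum fun k hk => ?_
        have hk : x k = 0 := (mem_filter.1 hk).2
        have hdk : 0 ≤ 1 - |d k| := sub_nonneg.2 (abs_le_one_of_mem_signSet (hd k))
        calc ε * z k ^ 2 = ε * |z k| ^ 2 := by rw [sq_abs]
          _ ≤ (1 - |d k|) * |z k| * |z k| := by
            rw [sq, ← mul_assoc]; gcongr; exact hε k hk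
          _ ≤ r * ((1 - |d k|) * |z k|) := by
            rw [mul_comm r]; gcongr; exact hz k hk
    _ ≤ r * bregmanL1 d x z :=
        mul_le_mul_of_nonneg_left (sum_one_sub_abs_mul_abs_le_bregmanL1 hd z) hr

lemma exists_mul_sum_sq_le_bregmanL1 (hd : ∀ k, d k ∈ signSet (x k))
    (hstrict : ∀ k, x k = 0 → |d k| < 1) {C : ℝ} (hC : 0 < C) :
    ∃ r > 0, ∀ z ∈ ball x r,
      C * ∑ k ∈ univ.filter (fun k => x k = 0), z k ^ 2 ≤ bregmanL1 d x z := by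
  obtain ⟨ε, hε, hεd⟩ := exists_pos_forall_le_of_pos fun k hk => sub_pos.2 (hstrict k hk)
  refine ⟨ε / C, by positivity, fun z hz => ?_⟩
  have hzZ : ∀ k, x k = 0 → |z k| ≤ ε / C := fun k hk => by
    simpa [hk] using (PiLp.norm_apply_le (z - x) k).trans (mem_ball_iff_norm.1 hz).le
  have h := mul_sum_sq_le_mul_bregmanL1 hd (by positivity) hεd hzZ
  rw [div_mul_eq_mul_div, le_div_iff₀ hC, mul_right_comm, mul_assoc] at h
  exact le_of_mul_le_mul_left h hε

end l1

section coordMask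

variable {ι : Type*} [Fintype ι] (p : ι → Prop) [DecidablePred p]

noncomputable def coordMask : EuclideanSpace ℝ ι →L[ℝ] EuclideanSpace ℝ ι :=
  LinearMap.toContinuousLinearMap
    { toFun v := WithLp.toLp 2 fun k => if p k then v k else 0
      map_add' u v := by ext k; by_cases hk : p k <;> simp [hk]
      map_smul' c v := by ext k; by_cases hk : p k <;> simp [hk] }

lemma coordMask_apply (v : EuclideanSpace ℝ ι) (k : ι) :
    coordMask p v k = if p k then v k else 0 := rfl

lemma norm_coordMask_sq (v : EuclideanSpace ℝ ι) :
    ‖coordMask p v‖ ^ 2 = ∑ k ∈ univ.filter p, v k ^ 2 := by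
  rw [EuclideanSpace.norm_sq_eq, sum_filter]
  exact sum_congr rfl fun k _ => by by_cases hk : p k <;> simp [coordMask_apply, hk]

lemma norm_prod_coordMask_apply_sq_le {F : Type*} [NormedAddCommGroup F] [NormedSpace ℝ F]
    (A : EuclideanSpace ℝ ι →L[ℝ] F) (v : EuclideanSpace ℝ ι) :
    ‖A.prod (coordMask p) v‖ ^ 2 ≤ ‖A v‖ ^ 2 + ∑ k ∈ univ.filter p, v k ^ 2 := by
  rw [← norm_coordMask_sq, ContinuousLinearMap.prod_apply, Prod.norm_mk]
  rcases max_cases ‖A v‖ ‖coordMask p v‖ with ⟨h, -⟩ | ⟨h, -⟩ <;> rw [h] <;>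
    nlinarith [sq_nonneg ‖A v‖, sq_nonneg ‖coordMask p v‖]

end coordMask

section lasso

variable {ι : Type*} [Fintype ι] {F : Type*} [NormedAddCommGroup F] [InnerProductSpace ℝ F]
  [CompleteSpace F]

lemma mem_l1MinimalSolutions_of_mem_signSet (A : EuclideanSpace ℝ ι →L[ℝ] F) (w : F)
    {p : EuclideanSpace ℝ ι} (hd : ∀ k, A.adjoint w k ∈ signSet (p k)) :
    p ∈ l1MinimalSolutions A (A p) := by
  refine ⟨rfl, fun v hv => ?_⟩
  calc ∑ k, |p k| = ⟪A.adjoint w, p⟫ := (inner_eq_sum_abs hd).symm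
    _ = ⟪A.adjoint w, v⟫ := by
        rw [ContinuousLinearMap.adjoint_inner_left, ContinuousLinearMap.adjoint_inner_left, hv]
    _ ≤ ∑ k, |v k| := inner_le_sum_abs (fun k => abs_le_one_of_mem_signSet (hd k)) v

lemma add_mem_l1MinimalSolutions (A : EuclideanSpace ℝ ι →L[ℝ] F) (w : F)
    {x : EuclideanSpace ℝ ι} (hd : ∀ k, A.adjoint w k ∈ signSet (x k)) {ρ : ℝ}
    (hρ : ∀ k, x k ≠ 0 → ρ ≤ |x k|) {q : EuclideanSpace ℝ ι} (hAq : A q = 0)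
    (hq₀ : ∀ k, x k = 0 → q k = 0) (hq : ‖q‖ < ρ) :
    x + q ∈ l1MinimalSolutions A (A x) := by
  have hmem := mem_l1MinimalSolutions_of_mem_signSet A w (p := x + q) fun k => by
    by_cases hk : x k = 0
    · simpa [hk, hq₀ k hk] using hd k
    · refine mem_signSet_of_abs_sub_lt (hd k) ?_
      calc |(x + q) k - x k| = ‖q k‖ := by simp
        _ < |x k| := ((PiLp.norm_apply_le q k).trans_lt hq).trans_le (hρ k hk)
  rwa [map_add, hAq, add_zero] at hmem

lemma exists_infDist_l1MinimalSolutions_sq_le (A : EuclideanSpace ℝ ι →L[ℝ] F) (w : F)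
    {x : EuclideanSpace ℝ ι} (hd : ∀ k, A.adjoint w k ∈ signSet (x k)) :
    ∃ ρ > 0, ∃ C > 0, ∀ z ∈ ball x ρ, infDist z (l1MinimalSolutions A (A x)) ^ 2 ≤
      C * (‖A (z - x)‖ ^ 2 + ∑ k ∈ univ.filter (fun k => x k = 0), z k ^ 2) := by
  obtain ⟨ρ, hρ, hρx⟩ := exists_pos_forall_le_of_pos fun k (hk : x k ≠ 0) => abs_pos.2 hk
  set L := A.prod (coordMask fun k => x k = 0)
  obtain ⟨C, hC, hCL⟩ := exists_norm_sub_starProjection_ker_le L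
  refine ⟨ρ, hρ, C ^ 2, by positivity, fun z hz => ?_⟩
  set K := LinearMap.ker (L : EuclideanSpace ℝ ι →ₗ[ℝ] F × EuclideanSpace ℝ ι)
  set v := z - x
  set q := K.starProjection v
  obtain ⟨hAq, hQq⟩ : A q = 0 ∧ coordMask (fun k => x k = 0) q = 0 :=
    Prod.mk_eq_zero.1 (K.starProjection_apply_mem v)
  have hq₀ : ∀ k, x k = 0 → q k = 0 := fun k hk => by
    simpa [coordMask_apply, hk] using congrArg (· k) hQq
  have hp := add_mem_l1MinimalSolutions A w hd hρx hAq hq₀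
    ((K.norm_starProjection_apply_le v).trans_lt (mem_ball_iff_norm.1 hz))
  have hLv : ‖L v‖ ^ 2 ≤ ‖A v‖ ^ 2 + ∑ k ∈ univ.filter (fun k => x k = 0), z k ^ 2 := by
    have hsum : ∑ k ∈ univ.filter (fun k => x k = 0), v k ^ 2 =
        ∑ k ∈ univ.filter (fun k => x k = 0), z k ^ 2 :=
      sum_congr rfl fun k hk => by simp [v, (mem_filter.1 hk).2]
    rw [← hsum]
    exact norm_prod_coordMask_apply_sq_le (fun k => x k = 0) A v
  calc infDist z (l1MinimalSolutions A (A x)) ^ 2 ≤ dist z (x + q) ^ 2 := by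
        gcongr; exacts [infDist_nonneg, infDist_le_dist_of_mem hp]
    _ = ‖v - q‖ ^ 2 := by rw [dist_eq_norm, sub_add_eq_sub_sub]
    _ ≤ (C * ‖L v‖) ^ 2 := by gcongr; exact hCL v
    _ ≤ C ^ 2 * (‖A v‖ ^ 2 + ∑ k ∈ univ.filter (fun k => x k = 0), z k ^ 2) := by
        rw [mul_pow]; gcongr

lemma lasso_eq_add_bregmanL1 (A : EuclideanSpace ℝ ι →L[ℝ] F) (b : F) (α : ℝ)
    (d x z : EuclideanSpace ℝ ι) :
    2⁻¹ * ‖A z - b‖ ^ 2 + α * ∑ k, |z k| =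
      (2⁻¹ * ‖A x - b‖ ^ 2 + α * ∑ k, |x k|) + ⟪A.adjoint (A x - b) + α • d, z - x⟫
        + 2⁻¹ * ‖A (z - x)‖ ^ 2 + α * bregmanL1 d x z := by
  rw [half_norm_apply_sub_sq_eq A b x z, bregmanL1, inner_add_left, real_inner_smul_left]
  ring

end lasso

/-- **`(A, α_δ)`-strong local subdifferentiability for ℓ¹-regularised
regression under strict complementarity** (Lemma `lemma:lasso:sc`).  Let
`A : ℝⁿ → ℝᵐ` be linear and suppose `(x̂, d̂)` is strictly complementary and
satisfies the ℓ¹ source condition `A x̂ = b̂`, `d̂ ∈ range A* ∩ Sign x̂`.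
Let `F_δ(z) = ½‖Az - b_δ‖₂² + α_δ‖z‖₁` for `α_δ ∈ (0, 1/2)`.  Then there are
an open neighbourhood `U` of `x̂` and a factor `γ > 0`, both independent of
`δ` (i.e. of `α_δ` and `b_δ`), such that `F_δ` is `(A, α_δ)`-strongly locally
subdifferentiable at `x̂` for `x̂* = A*(A x̂ - b_δ) + α_δ d̂` with respect to
the set `X̂` of ℓ¹-norm-minimising solutions of `Az = b̂`. -/
theorem lasso_semistrong_subdifferentiability
    {m n : ℕ}
    (A : EuclideanSpace ℝ (Fin n) →L[ℝ] EuclideanSpace ℝ (Fin m))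
    (bhat : EuclideanSpace ℝ (Fin m))
    (xhat dhat : EuclideanSpace ℝ (Fin n))
    (hsol : A xhat = bhat)
    (hrange : ∃ w : EuclideanSpace ℝ (Fin m), dhat = ContinuousLinearMap.adjoint A w)
    (hsign : ∀ k : Fin n,
      (xhat k < 0 → dhat k = -1) ∧ (0 < xhat k → dhat k = 1) ∧
      (xhat k = 0 → |dhat k| ≤ 1))
    (hstrict : ∀ k : Fin n, xhat k = 0 → |dhat k| < 1)
    -- the set X̂ of ℓ¹-norm-minimising solutions of A z = b̂
    (Xhat : Set (EuclideanSpace ℝ (Fin n)))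
    (hXhat : Xhat = {z : EuclideanSpace ℝ (Fin n) | A z = bhat ∧
      ∀ v : EuclideanSpace ℝ (Fin n), A v = bhat →
        ∑ k, |z k| ≤ ∑ k, |v k|}) :
    ∃ (U : Set (EuclideanSpace ℝ (Fin n))) (γ : ℝ),
      IsOpen U ∧ xhat ∈ U ∧ 0 < γ ∧
      ∀ αδ : ℝ, 0 < αδ → αδ < 2⁻¹ → ∀ bδ : EuclideanSpace ℝ (Fin m), ∀ z ∈ U,
        (2⁻¹ * ‖A xhat - bδ‖ ^ 2 + αδ * ∑ k, |xhat k|)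
            + ⟪ContinuousLinearMap.adjoint A (A xhat - bδ) + αδ • dhat, z - xhat⟫
            + γ * ‖A (z - xhat)‖ ^ 2 + γ * αδ * infDist z Xhat ^ 2
          ≤ 2⁻¹ * ‖A z - bδ‖ ^ 2 + αδ * ∑ k, |z k| := by
  obtain ⟨w, rfl⟩ := hrange
  obtain rfl : Xhat = l1MinimalSolutions A bhat := hXhat
  subst hsol
  obtain ⟨ρ, hρ, C, hC, hdist⟩ := exists_infDist_l1MinimalSolutions_sq_le A w hsign
  obtain ⟨r, hr, hbreg⟩ := exists_mul_sum_sq_le_bregmanL1 hsign hstrict hC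
  refine ⟨ball xhat (min ρ r), (2 + C)⁻¹, isOpen_ball, mem_ball_self (lt_min hρ hr),
    by positivity, fun α hα hα2 bδ z hz => ?_⟩
  rw [lasso_eq_add_bregmanL1 A bδ α (A.adjoint w) xhat z]
  have hD := hdist z (ball_subset_ball (min_le_left _ _) hz)
  have hB := hbreg z (ball_subset_ball (min_le_right _ _) hz)
  set a := ‖A (z - xhat)‖ ^ 2
  set B := bregmanL1 (A.adjoint w) xhat z
  have hB0 : 0 ≤ B := le_trans (by positivity) hB
  have hγ : (2 + C)⁻¹ * (2 + C) = 1 := inv_mul_cancel₀ (by positivity)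
  suffices (2 + C)⁻¹ * a + (2 + C)⁻¹ * α * infDist z (l1MinimalSolutions A (A xhat)) ^ 2 ≤
      2⁻¹ * a + α * B by linarith
  calc _ ≤ (2 + C)⁻¹ * a + (2 + C)⁻¹ * α * (C * a + B) := by gcongr; linarith
    _ ≤ (2 + C)⁻¹ * (2 + C) * 2⁻¹ * a + α * B := by
        have hαa : α * ((2 + C)⁻¹ * C * a) ≤ 2⁻¹ * ((2 + C)⁻¹ * C * a) :=
          mul_le_mul_of_nonneg_right hα2.le (by positivity)
        have hγB : (2 + C)⁻¹ * (α * B) ≤ α * B :=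
          mul_le_of_le_one_left (by positivity) (inv_le_one_of_one_le₀ (by linarith))
        linarith
    _ = 2⁻¹ * a + α * B := by rw [hγ, one_mul]
end

section
/- Let R(x) = ‖x‖₁ and A ∈ ℝ^{m×n}, with X = ℝⁿ and Y = ℝ^m. Suppose ‖b_δ − b̂‖₂ ≤ δ, the set X̂ of ℓ¹-norm-minimising solutions of Ax = b̂ is nonempty, and the approximate solutions x_δ satisfy [J_δ + α_δ R](x_δ) − [J_δ + α_δ R](x̂) ≤ e_δ for x̂ ∈ X̂, where J_δ(x) := (1/2)‖Ax − b_δ‖₂². If (α_δ, δ²/α_δ, e_δ/α_δ) → 0 as δ ↘ 0, then dist(x_δ, X̂) → 0 as δ ↘ 0. -/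
open Filter Topology Metric

/-!
Compare `x_δ` with a fixed `x̂ ∈ X̂`: since `‖Ax̂ - b_δ‖ ≤ δ`, the accuracy condition gives
`R(x_δ) ≤ R(x̂) + δ²/(2α_δ) + e_δ/α_δ` and `‖Ax_δ - b_δ‖² ≤ δ² + 2α_δ R(x̂) + 2e_δ`.
So `x_δ` eventually stays in a bounded sublevel set of `R`, `Ax_δ → b̂`, and by lower
semicontinuity every cluster point `y` of `x_δ` has `Ay = b̂` and `R(y) ≤ R(x̂)`, i.e. `y ∈ X̂`.
In a proper space, a bounded family whose cluster points all lie in `X̂` approaches `X̂`.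
-/

section ClusterPoints

variable {ι X : Type*} [TopologicalSpace X] {l : Filter ι} {f : ι → X} {y : X}

theorem MapClusterPt.eq_of_tendsto_comp {Y : Type*} [TopologicalSpace Y] [T2Space Y] {g : X → Y}
    {c : Y} (hy : MapClusterPt y l f) (hg : ContinuousAt g y) (h : Tendsto (g ∘ f) l (𝓝 c)) :
    g y = c :=
  eq_of_nhds_neBot ((hy.continuousAt_comp hg).clusterPt.mono h)

theorem MapClusterPt.le_of_eventually_le_of_tendsto {γ : Type*} [LinearOrder γ]
    [TopologicalSpace γ] [OrderTopology γ] [DenselyOrdered γ] {R : X → γ} {u : ι → γ} {c : γ}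
    (hy : MapClusterPt y l f) (hR : LowerSemicontinuous R) (hle : ∀ᶠ a in l, R (f a) ≤ u a)
    (hu : Tendsto u l (𝓝 c)) : R y ≤ c :=
  le_of_forall_gt_imp_ge_of_dense fun c' hc' =>
    (hR.isClosed_preimage c').mem_of_mapClusterPt hy <|
      (hle.and (hu.eventually (gt_mem_nhds hc'))).mono fun _ h => h.1.trans h.2.le

end ClusterPoints

theorem tendsto_infDist_zero_of_forall_mapClusterPt_mem {ι E : Type*} [PseudoMetricSpace E]
    [ProperSpace E] {l : Filter ι} {f : ι → E} {K S : Set E} (hK : Bornology.IsBounded K)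
    (hfK : ∀ᶠ a in l, f a ∈ K) (hS : ∀ y, MapClusterPt y l f → y ∈ S) :
    Tendsto (fun a => infDist (f a) S) l (𝓝 0) := by
  refine tendsto_order.2 ⟨fun ε hε => .of_forall fun a => hε.trans_le infDist_nonneg,
    fun ε hε => ?_⟩
  by_contra hfar
  have hcpt : IsCompact (closure K ∩ {z | ε ≤ infDist z S}) :=
    hK.isCompact_closure.inter_right (isClosed_le continuous_const (continuous_infDist_pt S))
  obtain ⟨y, ⟨-, hyfar⟩, hy⟩ := hcpt.exists_mapClusterPt_of_frequently <|
    (not_eventually.1 hfar).and_eventually hfK |>.mono fun a ⟨hfar, hK⟩ =>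
      ⟨subset_closure hK, not_lt.1 hfar⟩
  exact (hyfar.trans_lt' hε).ne' (infDist_zero_of_mem (hS y hy))

def minimizingSolutions {E F : Type*} (A : E → F) (R : E → ℝ) (bhat : F) : Set E :=
  {z | A z = bhat ∧ ∀ v, A v = bhat → R z ≤ R v}

section ApproximateMinimizers

variable {E F : Type*} [NormedAddCommGroup F] {A : E → F} {R : E → ℝ} {b : F} {z xh : E}
  {δ α e : ℝ}

theorem regularizer_le_of_approxMin (hxh : ‖A xh - b‖ ≤ δ) (hα : 0 < α)
    (h : 2⁻¹ * ‖A z - b‖ ^ 2 + α * R z ≤ 2⁻¹ * ‖A xh - b‖ ^ 2 + α * R xh + e) :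
    R z ≤ R xh + (δ ^ 2 / α / 2 + e / α) := by
  have hsq : ‖A xh - b‖ ^ 2 ≤ δ ^ 2 := pow_le_pow_left₀ (norm_nonneg _) hxh 2
  have hexpand : α * (R xh + (δ ^ 2 / α / 2 + e / α)) = α * R xh + 2⁻¹ * δ ^ 2 + e := by
    field_simp; ring
  rw [← mul_le_mul_iff_right₀ hα, hexpand]
  linarith [sq_nonneg ‖A z - b‖]

theorem sq_norm_sub_le_of_approxMin (hxh : ‖A xh - b‖ ≤ δ) (hα : 0 ≤ α) (hRz : 0 ≤ R z)
    (h : 2⁻¹ * ‖A z - b‖ ^ 2 + α * R z ≤ 2⁻¹ * ‖A xh - b‖ ^ 2 + α * R xh + e) :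
    ‖A z - b‖ ^ 2 ≤ δ ^ 2 + 2 * (α * R xh) + 2 * e := by
  have hsq : ‖A xh - b‖ ^ 2 ≤ δ ^ 2 := pow_le_pow_left₀ (norm_nonneg _) hxh 2
  linarith [mul_nonneg hα hRz]

end ApproximateMinimizers

section RegularizationLimit

variable {E F : Type*} [NormedAddCommGroup F] {A : E → F} {R : E → ℝ} {xh : E} {bhat : F}
  {b : ℝ → F} {α e : ℝ → ℝ} {x : ℝ → E}

theorem tendsto_apply_of_approxMin (hR : ∀ z, 0 ≤ R z) (hAxh : A xh = bhat)
    (hb : ∀ δ, 0 < δ → ‖b δ - bhat‖ ≤ δ) (hα : ∀ δ, 0 < δ → 0 ≤ α δ)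
    (hacc : ∀ δ, 0 < δ → 2⁻¹ * ‖A (x δ) - b δ‖ ^ 2 + α δ * R (x δ)
      ≤ 2⁻¹ * ‖A xh - b δ‖ ^ 2 + α δ * R xh + e δ)
    (hα0 : Tendsto α (𝓝[>] 0) (𝓝 0)) (he0 : Tendsto e (𝓝[>] 0) (𝓝 0)) :
    Tendsto (fun δ => A (x δ)) (𝓝[>] 0) (𝓝 bhat) := by
  have hδ0 : Tendsto id (𝓝[>] (0 : ℝ)) (𝓝 0) := nhdsWithin_le_nhds
  have hbound : Tendsto (fun δ => √(δ ^ 2 + 2 * (α δ * R xh) + 2 * e δ)) (𝓝[>] 0) (𝓝 0) := by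
    simpa using (((hδ0.pow 2).add ((hα0.mul_const (R xh)).const_mul 2)).add
      (he0.const_mul 2)).sqrt
  have hresidual : Tendsto (fun δ => A (x δ) - b δ) (𝓝[>] 0) (𝓝 0) := by
    refine tendsto_zero_iff_norm_tendsto_zero.2 <| squeeze_zero' (.of_forall fun _ => norm_nonneg _)
      (eventually_mem_nhdsWithin.mono fun δ (hδ : 0 < δ) => ?_) hbound
    have hxh : ‖A xh - b δ‖ ≤ δ := by rw [hAxh, norm_sub_rev]; exact hb δ hδ
    exact Real.le_sqrt_of_sq_le <|
      sq_norm_sub_le_of_approxMin hxh (hα δ hδ) (hR _) (hacc δ hδ)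
  have hdata : Tendsto b (𝓝[>] 0) (𝓝 bhat) :=
    tendsto_iff_norm_sub_tendsto_zero.2 <| squeeze_zero' (.of_forall fun _ => norm_nonneg _)
      (eventually_mem_nhdsWithin.mono hb) hδ0
  simpa using hresidual.add hdata

theorem tendsto_infDist_minimizingSolutions [PseudoMetricSpace E] [ProperSpace E]
    (hA : Continuous A) (hR : ∀ z, 0 ≤ R z) (hRlsc : LowerSemicontinuous R)
    (hRbdd : ∀ c, Bornology.IsBounded {z | R z ≤ c}) (hxh : xh ∈ minimizingSolutions A R bhat)
    (hb : ∀ δ, 0 < δ → ‖b δ - bhat‖ ≤ δ) (hα : ∀ δ, 0 < δ → 0 < α δ)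
    (hacc : ∀ δ, 0 < δ → 2⁻¹ * ‖A (x δ) - b δ‖ ^ 2 + α δ * R (x δ)
      ≤ 2⁻¹ * ‖A xh - b δ‖ ^ 2 + α δ * R xh + e δ)
    (hα0 : Tendsto α (𝓝[>] 0) (𝓝 0)) (hδα : Tendsto (fun δ => δ ^ 2 / α δ) (𝓝[>] 0) (𝓝 0))
    (heα : Tendsto (fun δ => e δ / α δ) (𝓝[>] 0) (𝓝 0)) :
    Tendsto (fun δ => infDist (x δ) (minimizingSolutions A R bhat)) (𝓝[>] 0) (𝓝 0) := by
  obtain ⟨hAxh, hxh_min⟩ := hxh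
  have hpos : ∀ᶠ δ in 𝓝[>] (0 : ℝ), 0 < δ := eventually_mem_nhdsWithin
  have hRx : ∀ᶠ δ in 𝓝[>] 0, R (x δ) ≤ R xh + (δ ^ 2 / α δ / 2 + e δ / α δ) :=
    hpos.mono fun δ hδ => regularizer_le_of_approxMin (by rw [hAxh, norm_sub_rev]; exact hb δ hδ)
      (hα δ hδ) (hacc δ hδ)
  have hRbound : Tendsto (fun δ => R xh + (δ ^ 2 / α δ / 2 + e δ / α δ)) (𝓝[>] 0) (𝓝 (R xh)) := by
    simpa using ((hδα.div_const 2).add heα).const_add (R xh)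
  have he0 : Tendsto e (𝓝[>] 0) (𝓝 0) := by
    simpa using (heα.mul hα0).congr' <| hpos.mono fun δ hδ => div_mul_cancel₀ _ (hα δ hδ).ne'
  have hAx : Tendsto (fun δ => A (x δ)) (𝓝[>] 0) (𝓝 bhat) :=
    tendsto_apply_of_approxMin hR hAxh hb (fun δ hδ => (hα δ hδ).le) hacc hα0 he0
  refine tendsto_infDist_zero_of_forall_mapClusterPt_mem (hRbdd (R xh + 1))
    (hRx.and (hRbound.eventually (gt_mem_nhds (lt_add_one _))) |>.mono fun _ h => h.1.trans h.2.le)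
    fun y hy => ⟨hy.eq_of_tendsto_comp hA.continuousAt hAx, fun v hv => ?_⟩
  exact (hy.le_of_eventually_le_of_tendsto hRlsc hRx hRbound).trans (hxh_min v hv)

end RegularizationLimit

theorem EuclideanSpace.norm_le_sum_abs {n : ℕ} (z : EuclideanSpace ℝ (Fin n)) :
    ‖z‖ ≤ ∑ k, |z k| := by
  rw [EuclideanSpace.norm_eq]
  calc √(∑ k, ‖z k‖ ^ 2) ≤ √((∑ k, ‖z k‖) ^ 2) :=
        Real.sqrt_le_sqrt (Finset.sum_sq_le_sq_sum_of_nonneg fun _ _ => norm_nonneg _)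
    _ = ∑ k, |z k| := Real.sqrt_sq (Finset.sum_nonneg fun _ _ => norm_nonneg _)

theorem EuclideanSpace.isBounded_setOf_sum_abs_le {n : ℕ} (c : ℝ) :
    Bornology.IsBounded {z : EuclideanSpace ℝ (Fin n) | ∑ k, |z k| ≤ c} :=
  isBounded_closedBall.subset fun z hz =>
    mem_closedBall_zero_iff.2 ((EuclideanSpace.norm_le_sum_abs z).trans hz)

theorem lasso_convergence_general
    {m n : ℕ}
    (A : EuclideanSpace ℝ (Fin n) →L[ℝ] EuclideanSpace ℝ (Fin m))
    (bhat : EuclideanSpace ℝ (Fin m))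
    (Xhat : Set (EuclideanSpace ℝ (Fin n)))
    (hXhat : Xhat = {z : EuclideanSpace ℝ (Fin n) | A z = bhat ∧
      ∀ v : EuclideanSpace ℝ (Fin n), A v = bhat →
        ∑ k, |z k| ≤ ∑ k, |v k|})
    (hne : Xhat.Nonempty)
    (b : ℝ → EuclideanSpace ℝ (Fin m))
    (hb : ∀ δ : ℝ, 0 < δ → ‖b δ - bhat‖ ≤ δ)
    (α e : ℝ → ℝ) (hα : ∀ δ : ℝ, 0 < δ → 0 < α δ)
    (x : ℝ → EuclideanSpace ℝ (Fin n))
    (hacc : ∀ δ : ℝ, 0 < δ → ∀ xh ∈ Xhat,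
      2⁻¹ * ‖A (x δ) - b δ‖ ^ 2 + α δ * ∑ k, |x δ k|
        ≤ 2⁻¹ * ‖A xh - b δ‖ ^ 2 + α δ * ∑ k, |xh k| + e δ)
    (hlim1 : Tendsto α (nhdsWithin 0 (Set.Ioi 0)) (nhds 0))
    (hlim2 : Tendsto (fun δ => δ ^ 2 / α δ) (nhdsWithin 0 (Set.Ioi 0)) (nhds 0))
    (hlim3 : Tendsto (fun δ => e δ / α δ) (nhdsWithin 0 (Set.Ioi 0)) (nhds 0)) :
    Tendsto (fun δ => infDist (x δ) Xhat) (nhdsWithin 0 (Set.Ioi 0)) (nhds 0) := by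
  obtain ⟨xh, hxh⟩ := hne
  subst hXhat
  have hl1_cont : Continuous fun z : EuclideanSpace ℝ (Fin n) => ∑ k, |z k| := by fun_prop
  exact tendsto_infDist_minimizingSolutions A.continuous
    (fun z => Finset.sum_nonneg fun k _ => abs_nonneg (z k)) hl1_cont.lowerSemicontinuous
    EuclideanSpace.isBounded_setOf_sum_abs_le hxh hb hα (fun δ hδ => hacc δ hδ xh hxh)
    hlim1 hlim2 hlim3

/-- **Convergence of ℓ¹-regularised regression (Lasso) to the set of
ℓ¹-minimising solutions** (Theorem `thm:lasso:main`).  Let `A : ℝⁿ → ℝᵐ` be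
linear, `X̂` the (nonempty) set of ℓ¹-norm-minimising solutions of `Az = b̂`,
and suppose `‖b_δ - b̂‖₂ ≤ δ` and that the approximate solutions `x_δ`
minimise `J_δ + α_δ‖·‖₁`, `J_δ(z) = ½‖Az - b_δ‖₂²`, to accuracy `e_δ`
relative to `X̂`.  If `(α_δ, δ²/α_δ, e_δ/α_δ) → 0` as `δ ↘ 0`, then
`dist(x_δ, X̂) → 0` as `δ ↘ 0`. -/
theorem lasso_convergence
    {m n : ℕ}
    (A : EuclideanSpace ℝ (Fin n) →L[ℝ] EuclideanSpace ℝ (Fin m))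
    (bhat : EuclideanSpace ℝ (Fin m))
    (Xhat : Set (EuclideanSpace ℝ (Fin n)))
    (hXhat : Xhat = {z : EuclideanSpace ℝ (Fin n) | A z = bhat ∧
      ∀ v : EuclideanSpace ℝ (Fin n), A v = bhat →
        ∑ k, |z k| ≤ ∑ k, |v k|})
    (hne : Xhat.Nonempty)
    (b : ℝ → EuclideanSpace ℝ (Fin m))
    (hb : ∀ δ : ℝ, 0 < δ → ‖b δ - bhat‖ ≤ δ)
    (α e : ℝ → ℝ) (hα : ∀ δ : ℝ, 0 < δ → 0 < α δ) (he : ∀ δ : ℝ, 0 < δ → 0 ≤ e δ)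
    (x : ℝ → EuclideanSpace ℝ (Fin n))
    (hacc : ∀ δ : ℝ, 0 < δ → ∀ xh ∈ Xhat,
      2⁻¹ * ‖A (x δ) - b δ‖ ^ 2 + α δ * ∑ k, |x δ k|
        ≤ 2⁻¹ * ‖A xh - b δ‖ ^ 2 + α δ * ∑ k, |xh k| + e δ)
    (hlim1 : Tendsto α (nhdsWithin 0 (Set.Ioi 0)) (nhds 0))
    (hlim2 : Tendsto (fun δ => δ ^ 2 / α δ) (nhdsWithin 0 (Set.Ioi 0)) (nhds 0))
    (hlim3 : Tendsto (fun δ => e δ / α δ) (nhdsWithin 0 (Set.Ioi 0)) (nhds 0)) :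
    Tendsto (fun δ => infDist (x δ) Xhat) (nhdsWithin 0 (Set.Ioi 0)) (nhds 0) :=
  lasso_convergence_general A bhat Xhat hXhat hne b hb α e hα x hacc hlim1 hlim2 hlim3
end
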